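/- arXiv:1711.06885 — 12 statements merged into one kernel-verified Lean document; each statement's English description precedes it below -/
import Mathlib

section
/- (Lind) Let λ be a Perron number of algebraic degree d over ℚ, and let B be the d × d integer companion matrix of the monic minimal polynomial of λ. If A = (a_{ij}) is an n × n nonnegative integral aperiodic matrix with spectral radius equal to λ, then there exist integer vectors z_1, …, z_n ∈ ℤ^d such that for each 1 ≤ i ≤ n one has B z_i = Σ_{j=1}^n a_{ij} z_j, and such that each z_i = (z_{i1}, …, z_{id}) satisfies z_{i1} + z_{i2} λ + ⋯ + z_{id} λ^{d−1} > 0 (i.e., each z_i lies in the positive half-space for the eigenvalue λ). -/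
/-!
By Perron–Frobenius, proved through the Collatz–Wielandt maximum principle, the spectral radius
`λ` of a primitive nonnegative matrix `A` is an eigenvalue with a positive eigenvector, unique up
to scaling; as a root of the integer polynomial `charpoly A`, `λ` is an algebraic integer.
Solving `(λ - A) v = 0` over the domain `ℤ[λ]` yields an eigenvector with entries in `ℤ[λ]`,
hence (after a sign) a positive one. Expanding `v i = ∑ k, z i k * λ ^ k` in the power basis of
`ℤ[λ]`, the map `w ↦ ∑ k, w k * λ ^ k` is injective on `ℤ ^ d` and turns the companion matrix
into multiplication by `λ`, so `B z i = ∑ j, A i j • z j` follows from `λ v i = ∑ j, A i j * v j`.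
-/

open Polynomial

/-- The spectral radius of an integer matrix: the supremum of the moduli of the
complex roots of its characteristic polynomial. -/
noncomputable def specRad {n : ℕ} (A : Matrix (Fin n) (Fin n) ℤ) : ℝ :=
  sSup {r : ℝ | ∃ μ : ℂ, (A.map (Int.cast : ℤ → ℂ)).charpoly.IsRoot μ ∧ r = ‖μ‖}

/-- A nonnegative integral matrix is aperiodic if some positive power has all
entries strictly positive. -/
def IsAperiodic {n : ℕ} (A : Matrix (Fin n) (Fin n) ℤ) : Prop :=
  ∃ k : ℕ, 0 < k ∧ ∀ i j, 0 < (A ^ k) i j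

/-- A Perron number: a real algebraic integer `p ≥ 1` strictly greater than the
absolute value of each of its other Galois conjugates. -/
def IsPerron (p : ℝ) : Prop :=
  1 ≤ p ∧ IsIntegral ℤ p ∧
    ∀ z : ℂ, (Polynomial.aeval z) (minpoly ℚ p) = 0 → z ≠ (p : ℂ) → ‖z‖ < p

/-- The Perron–Frobenius degree: the smallest size of a nonnegative integral
aperiodic matrix with the given spectral radius. -/
noncomputable def dPF (p : ℝ) : ℕ :=
  sInf {n : ℕ | ∃ A : Matrix (Fin n) (Fin n) ℤ,
    (∀ i j, 0 ≤ A i j) ∧ IsAperiodic A ∧ specRad A = p}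

/-- The companion matrix of a monic polynomial `x^d + a_{d-1}x^{d-1} + ⋯ + a_0`:
subdiagonal entries `1`, last column `(-a_0, …, -a_{d-1})ᵀ`, zeros elsewhere. -/
def companion (p : Polynomial ℤ) : Matrix (Fin p.natDegree) (Fin p.natDegree) ℤ :=
  Matrix.of fun i j =>
    if (i : ℕ) = (j : ℕ) + 1 then 1
    else if (j : ℕ) = p.natDegree - 1 then - p.coeff (i : ℕ) else 0

open Matrix Finset

section PerronFrobenius

variable {ι : Type*} [Fintype ι]

def collatzWielandtSet (A : Matrix ι ι ℝ) : Set ℝ :=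
  {s | ∃ u : ι → ℝ, 0 ≤ u ∧ u ≠ 0 ∧ s • u ≤ A *ᵥ u}

lemma mulVec_nonneg_of_nonneg {A : Matrix ι ι ℝ} (hA : ∀ i j, 0 ≤ A i j) {u : ι → ℝ}
    (hu : 0 ≤ u) : 0 ≤ A *ᵥ u :=
  fun i => sum_nonneg fun j _ => mul_nonneg (hA i j) (hu j)

lemma exists_pos_of_nonneg_of_ne_zero {u : ι → ℝ} (hu : 0 ≤ u) (hu0 : u ≠ 0) : ∃ j, 0 < u j := by
  by_contra! h
  exact hu0 (funext fun j => le_antisymm (h j) (hu j))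

lemma mulVec_apply_pos {M : Matrix ι ι ℝ} (hM : ∀ i j, 0 < M i j) {u : ι → ℝ} (hu : 0 ≤ u)
    (hu0 : u ≠ 0) (i : ι) : 0 < (M *ᵥ u) i := by
  obtain ⟨j, hj⟩ := exists_pos_of_nonneg_of_ne_zero hu hu0
  calc 0 < M i j * u j := mul_pos (hM i j) hj
    _ ≤ (M *ᵥ u) i := single_le_sum (fun j _ => mul_nonneg (hM i j).le (hu j)) (mem_univ j)

lemma pow_mulVec_of_mulVec_eq_smul [DecidableEq ι] {A : Matrix ι ι ℝ} {r : ℝ} {x : ι → ℝ}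
    (hx : A *ᵥ x = r • x) (m : ℕ) : (A ^ m) *ᵥ x = r ^ m • x := by
  induction m with
  | zero => simp
  | succ m ih => rw [pow_succ, ← mulVec_mulVec, hx, mulVec_smul, ih, smul_smul, ← pow_succ']

lemma smul_mem_stdSimplex_of_nonneg {u : ι → ℝ} (hu : 0 ≤ u) (hu0 : u ≠ 0) :
    (∑ i, u i)⁻¹ • u ∈ stdSimplex ℝ ι := by
  obtain ⟨j, hj⟩ := exists_pos_of_nonneg_of_ne_zero hu hu0
  have hsum : 0 < ∑ i, u i := hj.trans_le (single_le_sum (fun i _ => hu i) (mem_univ j))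
  refine ⟨fun i => mul_nonneg (inv_nonneg.2 hsum.le) (hu i), ?_⟩
  simp only [Pi.smul_apply, smul_eq_mul, ← mul_sum, inv_mul_cancel₀ hsum.ne']

lemma le_sum_of_smul_le_mulVec {A : Matrix ι ι ℝ} (hA : ∀ i j, 0 ≤ A i j) {s : ℝ}
    {u : ι → ℝ} (hu : u ∈ stdSimplex ℝ ι) (hsu : s • u ≤ A *ᵥ u) : s ≤ ∑ i, ∑ j, A i j :=
  calc s = ∑ i, s * u i := by rw [← mul_sum, hu.2, mul_one]
    _ ≤ ∑ i, (A *ᵥ u) i := sum_le_sum fun i _ => hsu i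
    _ ≤ ∑ i, ∑ j, A i j := sum_le_sum fun i _ => sum_le_sum fun j _ =>
        mul_le_of_le_one_right (hA i j) (mem_Icc_of_mem_stdSimplex hu j).2

-- After normalising `u` to the simplex, the relevant pairs `(s, u)` form a compact set.
lemma exists_isGreatest_collatzWielandtSet [Nonempty ι] {A : Matrix ι ι ℝ}
    (hA : ∀ i j, 0 ≤ A i j) : ∃ r, 0 ≤ r ∧ IsGreatest (collatzWielandtSet A) r := by
  set K : Set (ℝ × (ι → ℝ)) :=
    (Set.Icc 0 (∑ i, ∑ j, A i j) ×ˢ stdSimplex ℝ ι) ∩ {p | p.1 • p.2 ≤ A *ᵥ p.2}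
  have hK : IsCompact K :=
    (isCompact_Icc.prod (isCompact_stdSimplex ℝ ι)).inter_right
      (isClosed_le (continuous_fst.smul continuous_snd)
        (continuous_const.matrix_mulVec continuous_snd))
  classical
  obtain ⟨i⟩ := ‹Nonempty ι›
  have hKne : K.Nonempty :=
    ⟨(0, Pi.single i 1), ⟨⟨le_rfl, sum_nonneg fun i _ => sum_nonneg fun j _ => hA i j⟩,
      single_mem_stdSimplex ℝ i⟩, by
        simpa using mulVec_nonneg_of_nonneg hA (single_mem_stdSimplex ℝ i).1⟩
  obtain ⟨⟨r, x⟩, ⟨⟨⟨hr0, -⟩, hx⟩, hrx⟩, hmax⟩ := hK.exists_isMaxOn hKne continuous_fst.continuousOn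
  refine ⟨r, hr0, ⟨x, hx.1, ?_, hrx⟩, ?_⟩
  · rintro rfl
    simpa using hx.2
  rintro s ⟨u, hu, hu0, hsu⟩
  rcases le_or_gt s 0 with hs | hs
  · exact hs.trans hr0
  have hv := smul_mem_stdSimplex_of_nonneg hu hu0
  have hsv : s • (∑ i, u i)⁻¹ • u ≤ A *ᵥ (∑ i, u i)⁻¹ • u := by
    rw [smul_comm, mulVec_smul]
    exact smul_le_smul_of_nonneg_left hsu (inv_nonneg.2 (sum_nonneg fun i _ => hu i))
  have hsK : (s, (∑ i, u i)⁻¹ • u) ∈ K :=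
    ⟨⟨⟨hs.le, le_sum_of_smul_le_mulVec hA hv hsv⟩, hv⟩, hsv⟩
  exact hmax hsK

lemma exists_gt_smul_le_of_forall_mul_lt {r : ℝ} {y z : ι → ℝ} (h : ∀ i, r * y i < z i) :
    ∃ s > r, s • y ≤ z := by
  have hev : ∀ᶠ s in nhds r, ∀ i, s * y i < z i := Filter.eventually_all.2 fun i =>
    (continuous_mul_const (y i)).continuousAt.eventually_lt continuousAt_const (h i)
  obtain ⟨s, hs, hrs⟩ :=
    ((eventually_nhdsWithin_of_eventually_nhds (s := Set.Ioi r) hev).and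
      self_mem_nhdsWithin).exists
  exact ⟨s, hrs, fun i => (hs i).le⟩

theorem norm_mem_collatzWielandtSet {A : Matrix ι ι ℝ} (hA : ∀ i j, 0 ≤ A i j) {μ : ℂ}
    {v : ι → ℂ} (hv0 : v ≠ 0) (hv : A.map (↑) *ᵥ v = μ • v) : ‖μ‖ ∈ collatzWielandtSet A := by
  refine ⟨fun i => ‖v i‖, fun i => norm_nonneg _,
    fun h => hv0 (funext fun i => norm_eq_zero.1 (congrFun h i)), fun i => ?_⟩
  calc ‖μ‖ * ‖v i‖ = ‖(A.map (↑) *ᵥ v) i‖ := by rw [hv, Pi.smul_apply, smul_eq_mul, norm_mul]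
    _ ≤ ∑ j, ‖(A i j : ℂ) * v j‖ := norm_sum_le _ _
    _ = (A *ᵥ fun i => ‖v i‖) i := by
      simp [mulVec, dotProduct, abs_of_nonneg (hA i _)]

variable [DecidableEq ι] {A : Matrix ι ι ℝ} {k : ℕ}

-- If `r • x ≤ A *ᵥ x` were strict somewhere, then `A ^ k` would make it strict everywhere
-- for `y = A ^ k *ᵥ x`, and a slightly larger `s` would still satisfy `s • y ≤ A *ᵥ y`.
lemma mulVec_eq_smul_of_isGreatest (hk : ∀ i j, 0 < (A ^ k) i j)
    {r : ℝ} (hr : IsGreatest (collatzWielandtSet A) r) {x : ι → ℝ} (hx : 0 ≤ x) (hx0 : x ≠ 0)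
    (hrx : r • x ≤ A *ᵥ x) : A *ᵥ x = r • x := by
  by_contra hne
  set y := (A ^ k) *ᵥ x
  have hy : ∀ i, 0 < y i := mulVec_apply_pos hk hx hx0
  have hw : ∀ i, 0 < ((A ^ k) *ᵥ (A *ᵥ x - r • x)) i :=
    mulVec_apply_pos hk (sub_nonneg.2 hrx) (sub_ne_zero.2 hne)
  have hlt : ∀ i, r * y i < (A *ᵥ y) i := by
    intro i
    have hAy : A *ᵥ y = (A ^ k) *ᵥ (A *ᵥ x) := by
      simp only [y, mulVec_mulVec, ← pow_succ, ← pow_succ']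
    have := hw i
    rw [mulVec_sub, mulVec_smul, Pi.sub_apply, ← hAy] at this
    simpa [y] using this
  obtain ⟨s, hrs, hsy⟩ := exists_gt_smul_le_of_forall_mul_lt hlt
  obtain ⟨j, -⟩ := exists_pos_of_nonneg_of_ne_zero hx hx0
  exact hrs.not_ge (hr.2 ⟨y, fun i => (hy i).le, fun h => (hy j).ne' (congrFun h j), hsy⟩)

theorem exists_pos_mulVec_eq_smul [Nonempty ι] (hA : ∀ i j, 0 ≤ A i j)
    (hk : ∀ i j, 0 < (A ^ k) i j) :
    ∃ r x, 0 ≤ r ∧ IsGreatest (collatzWielandtSet A) r ∧ (∀ i, 0 < x i) ∧ A *ᵥ x = r • x := by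
  obtain ⟨r, hr0, hr⟩ := exists_isGreatest_collatzWielandtSet hA
  obtain ⟨x, hx, hx0, hrx⟩ := hr.1
  have hxA := mulVec_eq_smul_of_isGreatest hk hr hx hx0 hrx
  refine ⟨r, x, hr0, hr, fun i => ?_, hxA⟩
  have h := mulVec_apply_pos hk hx hx0 i
  rw [pow_mulVec_of_mulVec_eq_smul hxA, Pi.smul_apply, smul_eq_mul] at h
  exact pos_of_mul_pos_right h (pow_nonneg hr0 k)

-- Subtract from `u` the largest multiple of `x` leaving it nonnegative; the remainder is a
-- nonnegative eigenvector with a zero entry, which `A ^ k` forces to vanish.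
theorem eq_smul_of_mulVec_eq_smul (hk : ∀ i j, 0 < (A ^ k) i j) {r : ℝ} {x : ι → ℝ}
    (hx : ∀ i, 0 < x i) (hxA : A *ᵥ x = r • x) {u : ι → ℝ} (huA : A *ᵥ u = r • u) :
    ∃ c : ℝ, u = c • x := by
  rcases isEmpty_or_nonempty ι with hι | hι
  · exact ⟨0, Subsingleton.elim _ _⟩
  obtain ⟨i₀, -, hi₀⟩ := exists_min_image univ (fun i => u i / x i) univ_nonempty
  refine ⟨u i₀ / x i₀, ?_⟩
  set w := u - (u i₀ / x i₀) • x
  have hw : 0 ≤ w := fun i => by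
    have := (div_le_div_iff₀ (hx i₀) (hx i)).1 (hi₀ i (mem_univ i))
    simp only [w, Pi.sub_apply, Pi.smul_apply, smul_eq_mul, Pi.zero_apply, sub_nonneg]
    rw [div_mul_eq_mul_div, div_le_iff₀ (hx i₀)]
    linarith
  have hwi₀ : w i₀ = 0 := by simp [w, div_mul_cancel₀ _ (hx i₀).ne']
  have hwA : A *ᵥ w = r • w := by
    rw [mulVec_sub, huA, mulVec_smul, hxA, smul_comm, ← smul_sub]
  by_contra hne
  have h := mulVec_apply_pos hk hw (sub_ne_zero.2 hne) i₀
  rw [pow_mulVec_of_mulVec_eq_smul hwA, Pi.smul_apply, hwi₀, smul_zero] at h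
  exact h.false

theorem pos_or_neg_of_mulVec_eq_smul (hk : ∀ i j, 0 < (A ^ k) i j) {r : ℝ} {x : ι → ℝ}
    (hx : ∀ i, 0 < x i) (hxA : A *ᵥ x = r • x) {u : ι → ℝ} (hu0 : u ≠ 0)
    (huA : A *ᵥ u = r • u) : (∀ i, 0 < u i) ∨ ∀ i, 0 < -u i := by
  obtain ⟨c, rfl⟩ := eq_smul_of_mulVec_eq_smul hk hx hxA huA
  rcases (left_ne_zero_of_smul hu0).lt_or_gt with hc | hc
  · exact .inr fun i => by simpa using mul_pos_of_neg_of_neg hc (neg_neg_of_pos (hx i))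
  · exact .inl fun i => mul_pos hc (hx i)

end PerronFrobenius

section DotPowers

variable {R : Type*} [CommRing R]

def dotPowers (t : R) (d : ℕ) : (Fin d → ℤ) →ₗ[ℤ] R :=
  Fintype.linearCombination ℤ fun k : Fin d => t ^ (k : ℕ)

lemma dotPowers_apply (t : R) {d : ℕ} (w : Fin d → ℤ) :
    dotPowers t d w = ∑ k, (w k : R) * t ^ (k : ℕ) := by
  simp [dotPowers, Fintype.linearCombination_apply, zsmul_eq_mul]

lemma sum_companion_mul_pow {p : ℤ[X]} (hp : p.Monic) {t : R} (ht : aeval t p = 0)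
    (j : Fin p.natDegree) :
    ∑ k, (companion p k j : R) * t ^ (k : ℕ) = t ^ ((j : ℕ) + 1) := by
  by_cases hj : (j : ℕ) + 1 = p.natDegree
  · have hroot : ∑ k ∈ range p.natDegree, (p.coeff k : R) * t ^ k = -t ^ p.natDegree := by
      rw [aeval_eq_sum_range, sum_range_succ, hp.coeff_natDegree, one_smul] at ht
      simpa only [zsmul_eq_mul] using eq_neg_of_add_eq_zero_left ht
    have hcol : ∀ k : Fin p.natDegree, companion p k j = -p.coeff k := fun k => by
      rw [companion, of_apply, if_neg (by omega), if_pos (by omega)]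
    simp only [hcol, hj, Int.cast_neg, neg_mul, sum_neg_distrib]
    rw [Fin.sum_univ_eq_sum_range (fun k => (p.coeff k : R) * t ^ k), hroot, neg_neg]
  · have hj' : (j : ℕ) + 1 < p.natDegree := by omega
    rw [sum_eq_single ⟨j + 1, hj'⟩]
    · simp [companion]
    · intro k _ hk
      have : (k : ℕ) ≠ j + 1 := fun h => hk (Fin.ext h)
      simp [companion, this, show (j : ℕ) ≠ p.natDegree - 1 by omega]
    · simp

lemma dotPowers_companion_mulVec {p : ℤ[X]} (hp : p.Monic) {t : R} (ht : aeval t p = 0)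
    (z : Fin p.natDegree → ℤ) :
    dotPowers t _ (companion p *ᵥ z) = t * dotPowers t _ z := by
  simp only [dotPowers_apply, mulVec, dotProduct, Int.cast_sum, Int.cast_mul, sum_mul, mul_sum]
  rw [sum_comm]
  refine sum_congr rfl fun j _ => ?_
  simp only [mul_right_comm _ (z j : R), ← sum_mul, sum_companion_mul_pow hp ht, pow_succ]
  ring

variable [IsDomain R] [CharZero R] {t : R}

lemma coe_powerBasis'_basis (ht : IsIntegral ℤ t) :
    (fun k => ((Algebra.adjoin.powerBasis' ht).basis k : R)) =
      fun k : Fin (minpoly ℤ t).natDegree => t ^ (k : ℕ) := by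
  ext k
  rw [PowerBasis.coe_basis, Algebra.adjoin.powerBasis'_gen, SubmonoidClass.coe_pow]

lemma dotPowers_injective (ht : IsIntegral ℤ t) :
    Function.Injective (dotPowers t (minpoly ℤ t).natDegree) := by
  have h := (Algebra.adjoin.powerBasis' ht).basis.linearIndependent.map'
    (Algebra.adjoin ℤ {t}).val.toLinearMap
    (LinearMap.ker_eq_bot_of_injective Subtype.val_injective)
  rw [Function.comp_def] at h
  simp only [AlgHom.toLinearMap_apply, Subalgebra.coe_val] at h
  rw [coe_powerBasis'_basis] at h
  exact h.fintypeLinearCombination_injective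

lemma exists_dotPowers_eq (ht : IsIntegral ℤ t) {y : R} (hy : y ∈ Algebra.adjoin ℤ {t}) :
    ∃ w, dotPowers t (minpoly ℤ t).natDegree w = y := by
  let b := (Algebra.adjoin.powerBasis' ht).basis
  have h := congrArg Subtype.val (b.sum_repr ⟨y, hy⟩)
  rw [AddSubmonoidClass.coe_finsetSum] at h
  refine ⟨b.repr ⟨y, hy⟩, ?_⟩
  rw [dotPowers, ← coe_powerBasis'_basis ht]
  exact (Fintype.linearCombination_apply ℤ _ _).trans h

end DotPowers

section IntegerMatrix

variable {ι : Type*} [Fintype ι] [DecidableEq ι]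

lemma aeval_charpoly_eq_zero_iff {K : Type*} [CommRing K] [IsDomain K] (A : Matrix ι ι ℤ)
    (t : K) : aeval t A.charpoly = 0 ↔ ∃ x ≠ 0, A.map (Int.cast : ℤ → K) *ᵥ x = t • x := by
  rw [aeval_def, ← eval_map, ← charpoly_map, eval_charpoly, ← exists_mulVec_eq_zero_iff]
  simp only [sub_mulVec, scalar_apply, sub_eq_zero, eq_comm, algebraMap_int_eq,
    Int.coe_castRingHom, diagonal_const_mulVec]

lemma exists_mulVec_eq_smul_mem_adjoin {K : Type*} [CommRing K] [IsDomain K]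
    (A : Matrix ι ι ℤ) {t : K} (ht : aeval t A.charpoly = 0) :
    ∃ v ≠ 0, A.map (Int.cast : ℤ → K) *ᵥ v = t • v ∧ ∀ i, v i ∈ Algebra.adjoin ℤ {t} := by
  set S := Algebra.adjoin ℤ ({t} : Set K)
  have htS : aeval (⟨t, Algebra.self_mem_adjoin_singleton ℤ t⟩ : S) A.charpoly = 0 :=
    Subtype.val_injective (by simpa [← Subalgebra.aeval_coe] using ht)
  obtain ⟨w, hw0, hw⟩ := (aeval_charpoly_eq_zero_iff A _).1 htS
  refine ⟨fun i => w i, fun h => hw0 (funext fun i => Subtype.ext (congrFun h i)), ?_,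
    fun i => (w i).2⟩
  ext i
  simpa [mulVec, dotProduct] using congrArg Subtype.val (congrFun hw i)

lemma map_intCast_pow_apply_pos {A : Matrix ι ι ℤ} {k : ℕ} (hk : ∀ i j, 0 < (A ^ k) i j)
    (i j : ι) : 0 < ((A.map (Int.cast : ℤ → ℝ)) ^ k) i j := by
  have h := map_pow (Int.castRingHom ℝ).mapMatrix A k
  simp only [RingHom.mapMatrix_apply, Int.coe_castRingHom] at h
  rw [← h, map_apply]
  exact Int.cast_pos.2 (hk i j)

end IntegerMatrix

theorem specRad_eq_of_isGreatest {n : ℕ} {A : Matrix (Fin n) (Fin n) ℤ} (hA : ∀ i j, 0 ≤ A i j)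
    {r : ℝ} (hr0 : 0 ≤ r) (hr : IsGreatest (collatzWielandtSet (A.map Int.cast)) r)
    (hroot : aeval r A.charpoly = 0) : specRad A = r := by
  have hmap : A.map (Int.cast : ℤ → ℂ) = (A.map (Int.cast : ℤ → ℝ)).map (↑) := by
    ext i j; simp
  have hroot_iff (μ : ℂ) : (A.map (Int.cast : ℤ → ℂ)).charpoly.IsRoot μ ↔ aeval μ A.charpoly = 0 := by
    rw [IsRoot, aeval_def, ← eval_map, ← charpoly_map, algebraMap_int_eq, Int.coe_castRingHom]
  refine IsGreatest.csSup_eq ⟨⟨r, ?_, (Complex.norm_of_nonneg hr0).symm⟩, ?_⟩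
  · rw [hroot_iff, ← Complex.coe_algebraMap, aeval_algebraMap_apply, hroot, map_zero]
  · rintro _ ⟨μ, hμ, rfl⟩
    obtain ⟨v, hv0, hv⟩ := (aeval_charpoly_eq_zero_iff A μ).1 ((hroot_iff μ).1 hμ)
    exact hr.2 (norm_mem_collatzWielandtSet (fun i j => Int.cast_nonneg (hA i j)) hv0
      (hmap ▸ hv))

theorem exists_pos_mulVec_eq_smul_mem_adjoin {n : ℕ} [NeZero n] {A : Matrix (Fin n) (Fin n) ℤ}
    (hA : ∀ i j, 0 ≤ A i j) {k : ℕ} (hk : ∀ i j, 0 < (A ^ k) i j) {lam : ℝ}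
    (hs : specRad A = lam) :
    ∃ v, (∀ i, 0 < v i) ∧ A.map (Int.cast : ℤ → ℝ) *ᵥ v = lam • v ∧
      ∀ i, v i ∈ Algebra.adjoin ℤ {lam} := by
  have hk' := map_intCast_pow_apply_pos hk
  obtain ⟨r, x, hr0, hr, hx, hxA⟩ :=
    exists_pos_mulVec_eq_smul (fun i j => Int.cast_nonneg (hA i j)) hk'
  have hroot : aeval r A.charpoly = 0 :=
    (aeval_charpoly_eq_zero_iff A r).2 ⟨x, fun h => (hx 0).ne' (congrFun h 0), hxA⟩
  obtain rfl : r = lam := (specRad_eq_of_isGreatest hA hr0 hr hroot).symm.trans hs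
  obtain ⟨v, hv0, hvA, hvS⟩ := exists_mulVec_eq_smul_mem_adjoin A hroot
  rcases pos_or_neg_of_mulVec_eq_smul hk' hx hxA hv0 hvA with hpos | hneg
  · exact ⟨v, hpos, hvA, hvS⟩
  · exact ⟨-v, hneg, by rw [mulVec_neg, hvA, smul_neg], fun i => neg_mem (hvS i)⟩

theorem lind_converse_general (lam : ℝ)
    (n : ℕ) (A : Matrix (Fin n) (Fin n) ℤ)
    (hA : ∀ i j, 0 ≤ A i j) (hap : IsAperiodic A) (hs : specRad A = lam) :
    ∃ z : Fin n → Fin (minpoly ℤ lam).natDegree → ℤ,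
      (∀ i, (companion (minpoly ℤ lam)).mulVec (z i) = ∑ j, A i j • z j) ∧
      ∀ i, 0 < ∑ k, (z i k : ℝ) * lam ^ (k : ℕ) := by
  rcases Nat.eq_zero_or_pos n with rfl | hn
  · exact ⟨finZeroElim, finZeroElim, finZeroElim⟩
  have : NeZero n := ⟨hn.ne'⟩
  obtain ⟨k, -, hk⟩ := hap
  obtain ⟨v, hv, hvA, hvS⟩ := exists_pos_mulVec_eq_smul_mem_adjoin hA hk hs
  have hint : IsIntegral ℤ lam := ⟨A.charpoly, A.charpoly_monic,
    (aeval_charpoly_eq_zero_iff A lam).2 ⟨v, fun h => (hv 0).ne' (congrFun h 0), hvA⟩⟩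
  choose z hz using fun i => exists_dotPowers_eq hint (hvS i)
  refine ⟨z, fun i => dotPowers_injective hint ?_, fun i => ?_⟩
  · rw [dotPowers_companion_mulVec (minpoly.monic hint) (minpoly.aeval ℤ lam), map_sum, hz]
    simp only [map_zsmul, hz]
    simpa [mulVec, dotProduct, zsmul_eq_mul] using (congrFun hvA i).symm
  · simpa only [← dotPowers_apply, hz] using hv i

theorem lind_converse (lam : ℝ) (hlam : IsPerron lam)
    (n : ℕ) (A : Matrix (Fin n) (Fin n) ℤ)
    (hA : ∀ i j, 0 ≤ A i j) (hap : IsAperiodic A) (hs : specRad A = lam) :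
    ∃ z : Fin n → Fin (minpoly ℤ lam).natDegree → ℤ,
      (∀ i, (companion (minpoly ℤ lam)).mulVec (z i) = ∑ j, A i j • z j) ∧
      ∀ i, 0 < ∑ k, (z i k : ℝ) * lam ^ (k : ℕ) :=
  lind_converse_general lam n A hA hap hs
end

section
/- Let B̂ : ℝ³ → ℝ³ be a linear map whose eigenvalues are λ, δ, and the conjugate of δ, where λ > 1 is a positive real number, δ is a complex number with Im(δ) > 0, and |δ| < λ. Set t = δ/λ and η = |arctan((1 − Re(t)) / Im(t))|, and assume η ≤ 1. Suppose z_1, …, z_M ∈ ℝ³ are vectors such that: (i) each z_i lies in the positive half-space E corresponding to λ, i.e., the projection of z_i onto the one-dimensional λ-eigenspace along the B̂-invariant complement is a positive multiple of a fixed eigenvector v for λ; (ii) the conical hull Ĉ = { Σ ε_i z_i : ε_i ≥ 0 } satisfies B̂(Ĉ) ⊆ Ĉ; and (iii) Ĉ is non-degenerate, i.e., the vectors z_1, …, z_M span ℝ³. Then M ≥ 2π/(3η). -/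
/-!
A left eigenvector of `B` for `δ` gives a real-linear map `F` to `ℂ` with `F ∘ B = δ • F`, and the
coordinate `r` along `v` modulo the invariant plane satisfies `r ∘ B = λ • r`. So the points
`ζᵢ = F zᵢ / rᵢ` of the slice `r = 1` of the cone span a polygon `P` with at most `M` vertices and
`t • P ⊆ P`, where `t = δ / λ`.

Let `G` be the support function of `P`; it is positive because the orbit `tⁿ z` of a nonzero point
turns by `arg t ∈ (0, π)` at each step. With `κ = tan η = (1 - Re t) / Im t`, the function
`φ ↦ φ - log G(φ) / κ` gains `2π` over a period. On the arc of directions `φ` in which a vertex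
`z` is extremal it gains at most `2η`: there `t z ∈ P` forces the angle from `z` to `φ` to be at
most `η`. These arcs cover a period, with one of them cut in two, so `π ≤ η (M + 1)`; since
`η < π / 2` this gives `M ≥ 2π / (3η)`.
-/

open Polynomial Matrix Real Set

namespace InvariantCone

theorem sub_le_card_mul_of_isClosed_cover {ι : Type*} (f : ℝ → ℝ) {d : ℝ} (hd : 0 ≤ d)
    (S : ι → Set ℝ) (s : Finset ι) (hS : ∀ i ∈ s, IsClosed (S i))
    (hf : ∀ i ∈ s, ∀ x ∈ S i, ∀ y ∈ S i, x ≤ y → f y - f x ≤ d) {a b : ℝ} (hab : a ≤ b)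
    (hcover : Ico a b ⊆ ⋃ i ∈ s, S i) : f b - f a ≤ s.card * d := by
  classical
  induction s using Finset.strongInduction generalizing b with
  | H s ih =>
  rcases hab.eq_or_lt with rfl | hab
  · simp only [sub_self]; positivity
  have hb : b ∈ ⋃ i ∈ s, S i := by
    refine (isClosed_biUnion_finset hS).closure_subset_iff.mpr hcover ?_
    rw [closure_Ico hab.ne]
    exact right_mem_Icc.mpr hab.le
  obtain ⟨i, hi, hbi⟩ := mem_iUnion₂.mp hb
  have hK : IsCompact (S i ∩ Icc a b) := isCompact_Icc.inter_left (hS i hi)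
  obtain ⟨hpS, hap, hpb⟩ := hK.sInf_mem ⟨b, hbi, hab.le, le_rfl⟩
  set p := sInf (S i ∩ Icc a b)
  have hrest : f p - f a ≤ (s.erase i).card * d := by
    refine ih _ (Finset.erase_ssubset hi) (fun j hj ↦ hS j (Finset.mem_of_mem_erase hj))
      (fun j hj ↦ hf j (Finset.mem_of_mem_erase hj)) hap fun x hx ↦ ?_
    obtain ⟨j, hj, hxj⟩ := mem_iUnion₂.mp (hcover ⟨hx.1, hx.2.trans_le hpb⟩)
    have hji : j ≠ i := by
      rintro rfl
      exact (csInf_le hK.bddBelow ⟨hxj, hx.1, (hx.2.trans_le hpb).le⟩).not_gt hx.2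
    exact mem_iUnion₂.mpr ⟨j, Finset.mem_erase.mpr ⟨hji, hj⟩, hxj⟩
  have hcard : ((s.erase i).card : ℝ) + 1 = s.card := by
    exact_mod_cast Finset.card_erase_add_one hi
  nlinarith [hf i hi p hpS b hbi hpb]

noncomputable def dirProj (φ : ℝ) : ℂ →ₗ[ℝ] ℝ := cos φ • Complex.reLm + sin φ • Complex.imLm

@[simp]
lemma dirProj_apply (φ : ℝ) (z : ℂ) : dirProj φ z = z.re * cos φ + z.im * sin φ := by
  simp [dirProj, mul_comm]

lemma continuous_dirProj (z : ℂ) : Continuous fun φ ↦ dirProj φ z := by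
  simp only [dirProj_apply]; fun_prop

lemma dirProj_add_pi (φ : ℝ) (z : ℂ) : dirProj (φ + π) z = -dirProj φ z := by
  simp [cos_add_pi, sin_add_pi]; ring

lemma dirProj_add_two_pi (φ : ℝ) (z : ℂ) : dirProj (φ + 2 * π) z = dirProj φ z := by
  simp [cos_add_two_pi, sin_add_two_pi]

lemma dirProj_mul (φ : ℝ) (t z : ℂ) : dirProj φ (t * z) = ‖t‖ * dirProj (φ - t.arg) z := by
  simp only [dirProj_apply, Complex.mul_re, Complex.mul_im, cos_sub, sin_sub]
  rw [← Complex.norm_mul_cos_arg t, ← Complex.norm_mul_sin_arg t]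
  ring

lemma dirProj_eq_norm_mul_cos (φ : ℝ) (z : ℂ) : dirProj φ z = ‖z‖ * cos (φ - z.arg) := by
  simpa using dirProj_mul φ z 1

lemma dirProj_pow_mul (φ : ℝ) (t z : ℂ) (n : ℕ) :
    dirProj φ (t ^ n * z) = ‖t‖ ^ n * dirProj (φ - n * t.arg) z := by
  induction n generalizing φ with
  | zero => simp
  | succ n ih =>
    rw [pow_succ', mul_assoc, dirProj_mul, ih]
    push_cast
    ring_nf

lemma sin_sub_mul_dirProj (x w y : ℝ) (z : ℂ) :
    sin (y - x) * dirProj w z = sin (y - w) * dirProj x z + sin (w - x) * dirProj y z := by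
  simp only [dirProj_apply, sin_sub]
  ring

lemma im_mul_sin_le_of_dirProj_mul_le {t z : ℂ} (hz : z ≠ 0) {φ : ℝ}
    (h : dirProj φ (t * z) ≤ dirProj φ z) :
    t.im * sin (φ - z.arg) ≤ (1 - t.re) * cos (φ - z.arg) := by
  rw [dirProj_mul, dirProj_eq_norm_mul_cos, dirProj_eq_norm_mul_cos, sub_right_comm,
    cos_sub] at h
  rw [← Complex.norm_mul_cos_arg t, ← Complex.norm_mul_sin_arg t]
  have hz' : 0 < ‖z‖ := norm_pos_iff.mpr hz
  nlinarith

lemma exists_nat_add_mul_mem_Ioc {a c d : ℝ} (hd : 0 < d) (hac : a ≤ c) :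
    ∃ n : ℕ, a + n * d ∈ Ioc c (c + d) := by
  have h₁ := Nat.lt_floor_add_one ((c - a) / d)
  have h₂ := Nat.floor_le (div_nonneg (sub_nonneg.mpr hac) hd.le)
  rw [div_lt_iff₀ hd] at h₁
  rw [le_div_iff₀ hd] at h₂
  exact ⟨⌊(c - a) / d⌋₊ + 1, by push_cast; constructor <;> nlinarith⟩

lemma exists_dirProj_pow_mul_pos {t z : ℂ} (ht : 0 < t.im) (hz : z ≠ 0) (φ : ℝ) :
    ∃ n : ℕ, 0 < dirProj φ (t ^ n * z) := by
  have ht₀ : t ≠ 0 := fun h ↦ by simp [h] at ht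
  have hθ₀ : 0 < t.arg := (Complex.arg_nonneg_iff.mpr ht.le).lt_of_ne' fun h ↦ by
    simp [Complex.arg_eq_zero_iff.mp h] at ht
  have hθπ : t.arg < π := Complex.arg_lt_pi_iff.mpr (Or.inr ht.ne')
  obtain ⟨m, hm⟩ := exists_nat_ge ((z.arg - φ + π / 2) / (2 * π))
  rw [div_le_iff₀ (by positivity)] at hm
  obtain ⟨n, hn₁, hn₂⟩ :=
    exists_nat_add_mul_mem_Ioc hθ₀ (by linarith : z.arg - φ ≤ m * (2 * π) - π / 2)
  have hcos : 0 < cos (z.arg - φ + n * t.arg - (m : ℤ) * (2 * π)) :=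
    cos_pos_of_mem_Ioo ⟨by push_cast; linarith, by push_cast; linarith⟩
  rw [cos_sub_int_mul_two_pi, ← cos_neg] at hcos
  refine ⟨n, ?_⟩
  rw [dirProj_pow_mul, dirProj_eq_norm_mul_cos,
    show φ - n * t.arg - z.arg = -(z.arg - φ + n * t.arg) by ring]
  have := norm_pos_iff.mpr ht₀
  have := norm_pos_iff.mpr hz
  positivity

lemma exists_sub_int_mul_two_pi_mem_Ioo_of_cos_pos {a : ℝ} (ha : 0 < cos a) :
    ∃ k : ℤ, a - k * (2 * π) ∈ Ioo (-(π / 2)) (π / 2) := by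
  obtain ⟨hlo, hhi⟩ := toIocMod_mem_Ioc two_pi_pos (-π) a
  refine ⟨toIocDiv two_pi_pos (-π) a, ?_⟩
  have hα : a - toIocDiv two_pi_pos (-π) a * (2 * π) = toIocMod two_pi_pos (-π) a := by
    rw [← zsmul_eq_mul, ← self_sub_toIocMod, sub_sub_cancel]
  have hcos : 0 < cos (toIocMod two_pi_pos (-π) a) := by
    rwa [← hα, cos_sub_int_mul_two_pi]
  rw [hα]
  constructor
  · by_contra! h
    rw [← cos_neg] at hcos
    linarith [cos_nonpos_of_pi_div_two_le_of_le (by linarith : π / 2 ≤ -toIocMod two_pi_pos (-π) a)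
      (by linarith)]
  · by_contra! h
    linarith [cos_nonpos_of_pi_div_two_le_of_le h (by linarith)]

noncomputable def spiralGauge (κ s : ℝ) : ℝ := s - log (cos s) / κ

lemma spiralGauge_sub_int_mul_two_pi (κ s : ℝ) (k : ℤ) :
    spiralGauge κ (s - k * (2 * π)) = spiralGauge κ s - k * (2 * π) := by
  simp only [spiralGauge, cos_sub_int_mul_two_pi]; ring

lemma hasDerivAt_spiralGauge (κ : ℝ) {s : ℝ} (hs : s ∈ Ioo (-(π / 2)) (π / 2)) :
    HasDerivAt (spiralGauge κ) (1 + tan s / κ) s := by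
  have h := (hasDerivAt_id' s).sub
    (((hasDerivAt_cos s).log (cos_pos_of_mem_Ioo hs).ne').div_const κ)
  rwa [show 1 - -sin s / cos s / κ = 1 + tan s / κ by rw [tan_eq_sin_div_cos]; ring] at h

lemma continuousOn_spiralGauge (κ : ℝ) : ContinuousOn (spiralGauge κ) (Ioo (-(π / 2)) (π / 2)) :=
  fun _ hs ↦ (hasDerivAt_spiralGauge κ hs).continuousAt.continuousWithinAt

lemma differentiableOn_spiralGauge (κ : ℝ) :
    DifferentiableOn ℝ (spiralGauge κ) (Ioo (-(π / 2)) (π / 2)) :=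
  fun _ hs ↦ (hasDerivAt_spiralGauge κ hs).differentiableAt.differentiableWithinAt

lemma antitoneOn_spiralGauge {κ : ℝ} (hκ : 0 < κ) :
    AntitoneOn (spiralGauge κ) (Ioc (-(π / 2)) (-arctan κ)) := by
  have hsub : Ioc (-(π / 2)) (-arctan κ) ⊆ Ioo (-(π / 2)) (π / 2) :=
    Ioc_subset_Ioo_right (by linarith [arctan_pos.mpr hκ, pi_pos])
  refine antitoneOn_of_deriv_nonpos (convex_Ioc _ _) ((continuousOn_spiralGauge κ).mono hsub)
    ((differentiableOn_spiralGauge κ).mono (interior_subset.trans hsub)) fun s hs ↦ ?_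
  rw [interior_Ioc] at hs
  have htan := strictMonoOn_tan.monotoneOn (hsub (Ioo_subset_Ioc_self hs))
    (hsub ⟨by linarith [arctan_lt_pi_div_two κ], le_rfl⟩) hs.2.le
  rw [tan_neg, tan_arctan] at htan
  rw [(hasDerivAt_spiralGauge κ (hsub (Ioo_subset_Ioc_self hs))).deriv,
    ← le_neg_iff_add_nonpos_left, div_le_iff₀ hκ]
  linarith

lemma monotoneOn_spiralGauge {κ : ℝ} (hκ : 0 < κ) :
    MonotoneOn (spiralGauge κ) (Ico (-arctan κ) (π / 2)) := by
  have hsub : Ico (-arctan κ) (π / 2) ⊆ Ioo (-(π / 2)) (π / 2) :=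
    Ico_subset_Ioo_left (by linarith [arctan_lt_pi_div_two κ])
  refine monotoneOn_of_deriv_nonneg (convex_Ico _ _) ((continuousOn_spiralGauge κ).mono hsub)
    ((differentiableOn_spiralGauge κ).mono (interior_subset.trans hsub)) fun s hs ↦ ?_
  rw [interior_Ico] at hs
  have htan := strictMonoOn_tan.monotoneOn (hsub ⟨le_rfl, by linarith [arctan_pos.mpr hκ, pi_pos]⟩)
    (hsub (Ioo_subset_Ico_self hs)) hs.1.le
  rw [tan_neg, tan_arctan] at htan
  rw [(hasDerivAt_spiralGauge κ (hsub (Ioo_subset_Ico_self hs))).deriv,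
    ← neg_le_iff_add_nonneg', le_div_iff₀ hκ]
  linarith

lemma spiralGauge_sub_le_of_le_arctan {κ a b : ℝ} (hκ : 0 < κ) (ha : -(π / 2) < a) (hab : a ≤ b)
    (hb : b ≤ arctan κ) : spiralGauge κ b - spiralGauge κ a ≤ 2 * arctan κ := by
  have hη₀ := arctan_pos.mpr hκ
  have hη₁ := arctan_lt_pi_div_two κ
  have hends : spiralGauge κ (arctan κ) - spiralGauge κ (-arctan κ) = 2 * arctan κ := by
    simp only [spiralGauge, cos_neg]; ring
  have hmin : spiralGauge κ (-arctan κ) ≤ spiralGauge κ a := by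
    rcases le_total a (-arctan κ) with ha' | ha'
    · exact antitoneOn_spiralGauge hκ ⟨ha, ha'⟩ ⟨by linarith, le_rfl⟩ ha'
    · exact monotoneOn_spiralGauge hκ ⟨le_rfl, by linarith⟩ ⟨ha', by linarith⟩ ha'
  rcases le_total b (-arctan κ) with hb' | hb'
  · linarith [antitoneOn_spiralGauge hκ ⟨ha, hab.trans hb'⟩ ⟨ha.trans_le hab, hb'⟩ hab]
  · linarith [monotoneOn_spiralGauge hκ ⟨hb', by linarith⟩ ⟨by linarith, by linarith⟩ hb]

lemma spiralGauge_sub_le {κ a b : ℝ} (hκ : 0 < κ) (hab : a ≤ b) (hba : b < a + π)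
    (ha : 0 < cos a) (hb : 0 < cos b) (hsin : sin b ≤ κ * cos b) :
    spiralGauge κ b - spiralGauge κ a ≤ 2 * arctan κ := by
  obtain ⟨k, hk₁, hk₂⟩ := exists_sub_int_mul_two_pi_mem_Ioo_of_cos_pos ha
  rw [← cos_sub_int_mul_two_pi b k, ← sin_sub_int_mul_two_pi b k] at *
  set β := b - k * (2 * π)
  have hβ : β < π / 2 := by
    by_contra! h
    linarith [cos_nonpos_of_pi_div_two_le_of_le h (by linarith)]
  have hβη : β ≤ arctan κ := by
    rw [← arctan_tan (by linarith) hβ, tan_eq_sin_div_cos]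
    exact arctan_strictMono.monotone ((div_le_iff₀ hb).mpr hsin)
  have h := spiralGauge_sub_le_of_le_arctan hκ hk₁ (by linarith) hβη
  rwa [spiralGauge_sub_int_mul_two_pi, spiralGauge_sub_int_mul_two_pi,
    sub_sub_sub_cancel_right] at h

lemma countable_setOf_dirProj_eq_zero {w : ℂ} (hw : w ≠ 0) :
    {φ | dirProj φ w = 0}.Countable := by
  refine (countable_range fun k : ℤ ↦ w.arg + (2 * k + 1) * π / 2).mono fun φ (hφ : _ = 0) ↦ ?_
  rw [dirProj_eq_norm_mul_cos, mul_eq_zero, norm_eq_zero] at hφ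
  obtain ⟨k, hk⟩ := cos_eq_zero_iff.mp (hφ.resolve_left hw)
  exact ⟨k, by linarith⟩

lemma exists_injOn_dirProj (Z : Finset ℂ) : ∃ c : ℝ, InjOn (dirProj c) Z := by
  have hbad : (⋃ z ∈ (Z : Set ℂ), ⋃ z' ∈ (Z : Set ℂ),
      {φ | z ≠ z' ∧ dirProj φ z = dirProj φ z'}).Countable := by
    refine Z.countable_toSet.biUnion fun z _ ↦ Z.countable_toSet.biUnion fun z' _ ↦ ?_
    rcases eq_or_ne z z' with rfl | hne
    · simp
    · refine (countable_setOf_dirProj_eq_zero (sub_ne_zero.mpr hne)).mono fun φ hφ ↦ ?_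
      exact show dirProj φ (z - z') = 0 by rw [map_sub, hφ.2, sub_self]
  obtain ⟨c, hc⟩ := (nonempty_compl.mpr fun h ↦ Cardinal.not_countable_real (h ▸ hbad))
  refine ⟨c, fun z hz z' hz' h ↦ by_contra fun hne ↦ hc ?_⟩
  exact mem_iUnion₂.mpr ⟨z, hz, mem_iUnion₂.mpr ⟨z', hz', hne, h⟩⟩

def normalAngles (Z : Finset ℂ) (z : ℂ) : Set ℝ := {φ | ∀ z' ∈ Z, dirProj φ z' ≤ dirProj φ z}

section NormalAngles

variable {Z : Finset ℂ} {z : ℂ}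

lemma isClosed_normalAngles : IsClosed (normalAngles Z z) := by
  simp only [normalAngles, ofPred_forall]
  exact isClosed_biInter fun z' _ ↦ isClosed_le (continuous_dirProj z') (continuous_dirProj z)

lemma add_two_pi_mem_normalAngles_iff {φ : ℝ} :
    φ + 2 * π ∈ normalAngles Z z ↔ φ ∈ normalAngles Z z := by
  simp [normalAngles]

lemma Icc_subset_normalAngles {x y : ℝ} (hx : x ∈ normalAngles Z z) (hy : y ∈ normalAngles Z z)
    (hyx : y < x + π) : Icc x y ⊆ normalAngles Z z := by
  rintro w ⟨hxw, hwy⟩ z' hz'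
  rcases (hxw.trans hwy).eq_or_lt with rfl | hxy
  · rw [le_antisymm hwy hxw]; exact hx z' hz'
  have hsin : 0 < sin (y - x) := sin_pos_of_pos_of_lt_pi (by linarith) (by linarith)
  have h₁ : 0 ≤ sin (y - w) := sin_nonneg_of_nonneg_of_le_pi (by linarith) (by linarith)
  have h₂ : 0 ≤ sin (w - x) := sin_nonneg_of_nonneg_of_le_pi (by linarith) (by linarith)
  refine le_of_mul_le_mul_left ?_ hsin
  rw [sin_sub_mul_dirProj x w y, sin_sub_mul_dirProj x w y]
  gcongr
  exacts [hx z' hz', hy z' hz']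

variable (hpos : ∀ φ, ∃ z ∈ Z, 0 < dirProj φ z)
include hpos

lemma dirProj_pos_of_mem_normalAngles {φ : ℝ} (hφ : φ ∈ normalAngles Z z) : 0 < dirProj φ z := by
  obtain ⟨z', hz', h⟩ := hpos φ
  exact h.trans_le (hφ z' hz')

lemma add_pi_notMem_normalAngles {φ : ℝ} (hφ : φ ∈ normalAngles Z z) :
    φ + π ∉ normalAngles Z z := fun h ↦ by
  have := dirProj_pos_of_mem_normalAngles hpos h
  rw [dirProj_add_pi] at this
  linarith [dirProj_pos_of_mem_normalAngles hpos hφ]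

lemma sub_lt_pi_of_Icc_subset_normalAngles {x y : ℝ} (hxy : x ≤ y)
    (h : Icc x y ⊆ normalAngles Z z) : y - x < π := by
  by_contra! hπ
  exact add_pi_notMem_normalAngles hpos (h ⟨le_rfl, hxy⟩) (h ⟨by linarith [pi_pos], by linarith⟩)

lemma Icc_subset_normalAngles_of_le_add_pi {x y : ℝ} (hx : x ∈ normalAngles Z z)
    (hy : y ∈ normalAngles Z z) (hyx : y ≤ x + π) : Icc x y ⊆ normalAngles Z z :=
  Icc_subset_normalAngles hx hy <| hyx.lt_of_ne fun h ↦ add_pi_notMem_normalAngles hpos hx (h ▸ hy)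

lemma Icc_subset_normalAngles_of_notMem {c x y : ℝ} (hc : c ∉ normalAngles Z z)
    (hx : x ∈ normalAngles Z z) (hy : y ∈ normalAngles Z z) (hcx : c ≤ x)
    (hyc : y ≤ c + 2 * π) : Icc x y ⊆ normalAngles Z z := by
  rcases le_or_gt y (x + π) with hyx | hyx
  · exact Icc_subset_normalAngles_of_le_add_pi hpos hx hy hyx
  · have hx' := add_two_pi_mem_normalAngles_iff.mpr hx
    have := Icc_subset_normalAngles_of_le_add_pi hpos hy hx' (by linarith) ⟨hyc, by linarith⟩
    exact absurd (add_two_pi_mem_normalAngles_iff.mp this) hc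

theorem two_pi_le_card_add_one_mul {f : ℝ → ℝ} (hf : ∀ φ, f (φ + 2 * π) = f φ + 2 * π) {d : ℝ}
    (hinc : ∀ z ∈ Z, ∀ x y, x ≤ y → Icc x y ⊆ normalAngles Z z → f y - f x ≤ d) :
    2 * π ≤ (Z.card + 1) * d := by
  classical
  have hmax (φ : ℝ) : ∃ z ∈ Z, φ ∈ normalAngles Z z :=
    Z.exists_max_image (dirProj φ) (let ⟨z, hz, _⟩ := hpos φ; ⟨z, hz⟩)
  obtain ⟨c, hc⟩ := exists_injOn_dirProj Z
  obtain ⟨z₀, hz₀, hcz₀⟩ := hmax c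
  have hd : 0 ≤ d := by simpa using hinc z₀ hz₀ c c le_rfl (by simpa using hcz₀)
  have huniq : ∀ z ∈ Z, c ∈ normalAngles Z z → z = z₀ := fun z hz h ↦
    hc hz hz₀ (le_antisymm (hcz₀ z hz) (h z₀ hz₀))
  -- The normal arc of `z₀` is the only one containing `c`, and the only one cut in two.
  let S : Option ℂ → Set ℝ
    | none => normalAngles Z z₀ ∩ Icc (c + π) (c + 2 * π)
    | some z => normalAngles Z z ∩ Icc c (if z = z₀ then c + π else c + 2 * π)
  have hcover := sub_le_card_mul_of_isClosed_cover f hd S (Finset.insertNone Z)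
    (by rintro (_ | z) - <;> exact isClosed_normalAngles.inter isClosed_Icc) ?_
    (by linarith [pi_pos] : c ≤ c + 2 * π) ?_
  · rw [hf, Finset.card_insertNone] at hcover
    push_cast at hcover
    linarith
  · rintro (_ | z) hz x ⟨hx, hxc, hxc'⟩ y ⟨hy, hyc, hyc'⟩ hxy
    · exact hinc z₀ hz₀ x y hxy
        (Icc_subset_normalAngles_of_le_add_pi hpos hx hy (by linarith))
    · have hz : z ∈ Z := Finset.mem_insertNone.mp hz z rfl
      refine hinc z hz x y hxy ?_
      split_ifs at hxc' hyc' with hzz₀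
      · exact Icc_subset_normalAngles_of_le_add_pi hpos hx hy (by linarith)
      · exact Icc_subset_normalAngles_of_notMem hpos (fun h ↦ hzz₀ (huniq z hz h)) hx hy hxc
          hyc'
  · rintro x ⟨hcx, hxc⟩
    obtain ⟨z, hz, hxz⟩ := hmax x
    simp only [mem_iUnion, Finset.mem_insertNone]
    by_cases h : z = z₀ ∧ c + π ≤ x
    · exact ⟨none, by simp, h.1 ▸ hxz, h.2, hxc.le⟩
    · refine ⟨some z, by simpa using hz, hxz, hcx, ?_⟩
      split_ifs with hzz₀
      · exact not_lt.mp fun hlt ↦ h ⟨hzz₀, hlt.le⟩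
      · exact hxc.le

lemma sub_log_dirProj_le {κ : ℝ} (hκ : 0 < κ)
    (hvert : ∀ φ ∈ normalAngles Z z, sin (φ - z.arg) ≤ κ * cos (φ - z.arg))
    {x y : ℝ} (hxy : x ≤ y) (h : Icc x y ⊆ normalAngles Z z) :
    (y - log (dirProj y z) / κ) - (x - log (dirProj x z) / κ) ≤ 2 * arctan κ := by
  have hx := h ⟨le_rfl, hxy⟩
  have hy := h ⟨hxy, le_rfl⟩
  have hpx := dirProj_pos_of_mem_normalAngles hpos hx
  have hpy := dirProj_pos_of_mem_normalAngles hpos hy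
  simp only [dirProj_eq_norm_mul_cos] at hpx hpy ⊢
  have hz := left_ne_zero_of_mul hpx.ne'
  have hcx := pos_of_mul_pos_right hpx (norm_nonneg z)
  have hcy := pos_of_mul_pos_right hpy (norm_nonneg z)
  have key := spiralGauge_sub_le hκ (sub_le_sub_right hxy z.arg)
    (by linarith [sub_lt_pi_of_Icc_subset_normalAngles hpos hxy h]) hcx hcy (hvert y hy)
  rw [log_mul hz hcx.ne', log_mul hz hcy.ne', add_div, add_div]
  simp only [spiralGauge] at key
  linarith

end NormalAngles

lemma mul_mem_convexHull {s : Set ℂ} {t : ℂ} (hs : ∀ z ∈ s, t * z ∈ convexHull ℝ s) {w : ℂ}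
    (hw : w ∈ convexHull ℝ s) : t * w ∈ convexHull ℝ s := by
  have h : t * w ∈ LinearMap.mulLeft ℝ t '' convexHull ℝ s := ⟨w, hw, rfl⟩
  rw [LinearMap.image_convexHull] at h
  exact convexHull_min (by rintro _ ⟨z, hz, rfl⟩; exact hs z hz) (convex_convexHull ℝ s) h

lemma pow_mul_mem_convexHull {s : Set ℂ} {t : ℂ} (hs : ∀ z ∈ s, t * z ∈ convexHull ℝ s) (n : ℕ)
    {z : ℂ} (hz : z ∈ s) : t ^ n * z ∈ convexHull ℝ s := by
  induction n with
  | zero => simpa using subset_convexHull ℝ s hz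
  | succ n ih => simpa [pow_succ', mul_assoc] using mul_mem_convexHull hs ih

theorem pi_le_arctan_mul_card_add_one {Z : Finset ℂ} {t : ℂ} (ht : 0 < t.im) (ht' : t.re < 1)
    (hZ : ∃ z ∈ Z, z ≠ 0) (hinv : ∀ z ∈ Z, t * z ∈ convexHull ℝ (Z : Set ℂ)) :
    π ≤ arctan ((1 - t.re) / t.im) * (Z.card + 1) := by
  set κ := (1 - t.re) / t.im
  have hκ : 0 < κ := div_pos (by linarith) ht
  have hmax (φ : ℝ) {w : ℂ} (hw : w ∈ convexHull ℝ (Z : Set ℂ)) :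
      ∃ z ∈ Z, dirProj φ w ≤ dirProj φ z :=
    ((dirProj φ).convexOn convex_univ).exists_ge_of_mem_convexHull (subset_univ _) hw
  have hpos (φ : ℝ) : ∃ z ∈ Z, 0 < dirProj φ z := by
    obtain ⟨z₀, hz₀, hne⟩ := hZ
    obtain ⟨n, hn⟩ := exists_dirProj_pow_mul_pos ht hne φ
    obtain ⟨z, hz, hle⟩ := hmax φ (pow_mul_mem_convexHull hinv n hz₀)
    exact ⟨z, hz, hn.trans_le hle⟩
  have hvert : ∀ z ∈ Z, ∀ φ ∈ normalAngles Z z, sin (φ - z.arg) ≤ κ * cos (φ - z.arg) := by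
    intro z hz φ hφ
    obtain ⟨z', hz', hle⟩ := hmax φ (hinv z hz)
    have hz0 : z ≠ 0 := fun h ↦ by simpa [h] using dirProj_pos_of_mem_normalAngles hpos hφ
    have h := im_mul_sin_le_of_dirProj_mul_le hz0 (hle.trans (hφ z' hz'))
    rw [div_mul_eq_mul_div, le_div_iff₀ ht]
    linarith
  have hZne : Z.Nonempty := let ⟨z, hz, _⟩ := hZ; ⟨z, hz⟩
  set G : ℝ → ℝ := fun φ ↦ Z.sup' hZne (dirProj φ)
  have hG : ∀ z ∈ Z, ∀ φ ∈ normalAngles Z z, G φ = dirProj φ z := fun z hz φ hφ ↦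
    le_antisymm (Finset.sup'_le _ _ hφ) (Finset.le_sup' (dirProj φ) hz)
  have h := two_pi_le_card_add_one_mul hpos (f := fun φ ↦ φ - log (G φ) / κ)
    (fun φ ↦ by simp only [G, dirProj_add_two_pi]; ring) fun z hz x y hxy h ↦ by
      simpa only [hG z hz x (h ⟨le_rfl, hxy⟩), hG z hz y (h ⟨hxy, le_rfl⟩)] using
        sub_log_dirProj_le hpos hκ (hvert z hz) hxy h
  linarith

lemma exists_linearMap_mulVec_eq_mul {n : Type*} [Fintype n] [DecidableEq n] (B : Matrix n n ℝ)
    {δ : ℂ} (hδ : (B.map Complex.ofReal).charpoly.IsRoot δ) :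
    ∃ F : (n → ℝ) →ₗ[ℝ] ℂ, F ≠ 0 ∧ ∀ x, F (B *ᵥ x) = δ * F x := by
  have hδ' : Module.End.HasEigenvalue (toLin' (B.map Complex.ofReal)ᵀ) δ := by
    rwa [Module.End.hasEigenvalue_iff_isRoot_charpoly, Matrix.charpoly_toLin', charpoly_transpose]
  obtain ⟨w, hw⟩ := hδ'.exists_hasEigenvector
  have hwB : w ᵥ* B.map Complex.ofReal = δ • w := by
    rw [← mulVec_transpose, ← toLin'_apply]; exact hw.apply_eq_smul
  have hF (x : n → ℝ) : Fintype.linearCombination ℝ w x = w ⬝ᵥ (Complex.ofReal ∘ x) := by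
    simp [Fintype.linearCombination_apply, dotProduct, Complex.real_smul, mul_comm]
  refine ⟨Fintype.linearCombination ℝ w, fun h ↦ hw.2 (funext fun i ↦ ?_), fun x ↦ ?_⟩
  · simpa using LinearMap.congr_fun h (Pi.single i 1)
  · have hx : Complex.ofReal ∘ (B *ᵥ x) = B.map Complex.ofReal *ᵥ (Complex.ofReal ∘ x) :=
      funext (Complex.ofRealHom.map_mulVec B x)
    rw [hF, hF, hx, dotProduct_mulVec, hwB, smul_dotProduct, smul_eq_mul]

lemma mul_eq_sum_of_apply_eq_sum {K V ι : Type*} [Field K] [AddCommGroup V] [Module K V]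
    [Fintype ι] {f q : Module.End K V} (hfq : Commute f q) {v : V} (hv : v ≠ 0) {lam c : K}
    (hc : c ≠ 0) (hfv : f v = lam • v) (hqv : q v = c • v) {z : ι → V} {r : ι → K}
    (hz : ∀ j, z j - r j • v ∈ LinearMap.ker q) {i : ι} {ε : ι → K}
    (h : f (z i) = ∑ j, ε j • z j) : lam * r i = ∑ j, ε j * r j := by
  have hqz (j : ι) : q (z j) = (c * r j) • v := by
    rw [← sub_eq_zero, ← LinearMap.mem_ker.mp (hz j), map_sub, map_smul, hqv, smul_smul, mul_comm]
  refine mul_left_cancel₀ hc (smul_left_injective K hv ?_)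
  calc (c * (lam * r i)) • v = f (q (z i)) := by
        rw [hqz, map_smul, hfv, smul_smul]; ring_nf
    _ = q (f (z i)) := by rw [← Module.End.mul_apply, hfq.eq, Module.End.mul_apply]
    _ = (c * ∑ j, ε j * r j) • v := by
        simp only [h, map_sum, map_smul, hqz, smul_smul, Finset.mul_sum, ← Finset.sum_smul]
        congr 1; exact Finset.sum_congr rfl fun j _ ↦ by ring

lemma mul_eq_sum_of_mulVec_eq_sum {n ι : Type*} [Fintype n] [DecidableEq n] [Fintype ι]
    {B : Matrix n n ℝ} {δ : ℂ} (hδ : δ.im ≠ 0) {v : n → ℝ} (hv : v ≠ 0) {lam : ℝ}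
    (hBv : B *ᵥ v = lam • v) {z : ι → n → ℝ} {r : ι → ℝ}
    (hz : ∀ j, z j - r j • v ∈ LinearMap.ker (toLin' (B * B - (2 * δ.re) • B + ‖δ‖ ^ 2 • 1)))
    {i : ι} {ε : ι → ℝ} (h : B *ᵥ z i = ∑ j, ε j • z j) : lam * r i = ∑ j, ε j * r j := by
  have hcomm : Commute B (B * B - (2 * δ.re) • B + ‖δ‖ ^ 2 • 1) :=
    (((Commute.refl B).mul_right (Commute.refl B)).sub_right
      ((Commute.refl B).smul_right _)).add_right ((Commute.one_right B).smul_right _)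
  have hc : lam ^ 2 - 2 * δ.re * lam + ‖δ‖ ^ 2 ≠ 0 := by
    rw [Complex.sq_norm, Complex.normSq_apply]
    nlinarith [sq_nonneg (lam - δ.re), mul_self_pos.mpr hδ]
  refine mul_eq_sum_of_apply_eq_sum (hcomm.map toLinAlgEquiv') hv hc (by simpa using hBv) ?_ hz
    (by simpa using h)
  rw [toLinAlgEquiv'_apply, add_mulVec, sub_mulVec, ← mulVec_mulVec, hBv, mulVec_smul, hBv,
    smul_mulVec, hBv, smul_mulVec, one_mulVec, smul_smul, smul_smul, ← sub_smul, ← add_smul]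
  ring_nf

lemma div_mul_div_mem_convexHull {ι : Type*} [Fintype ι] {a : ι → ℂ} {r ε : ι → ℝ}
    (hr : ∀ j, 0 < r j) (hε : ∀ j, 0 ≤ ε j) {δ : ℂ} {lam : ℝ} (hlam : 0 < lam) {i : ι}
    (ha : δ * a i = ∑ j, ε j • a j) (hri : lam * r i = ∑ j, ε j * r j) :
    δ / lam * (a i / r i) ∈ convexHull ℝ (range fun j ↦ a j / r j) := by
  have hsum : 0 < ∑ j, ε j * r j := hri ▸ mul_pos hlam (hr i)
  convert Finset.univ.centerMass_mem_convexHull (fun j _ ↦ mul_nonneg (hε j) (hr j).le) hsum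
    (z := fun j ↦ a j / r j) fun j _ ↦ mem_range_self j using 1
  rw [Finset.centerMass, ← hri]
  have hterm (j : ι) : (ε j * r j) • (a j / r j) = ε j • a j := by
    rw [Complex.real_smul, Complex.real_smul]
    field_simp [Complex.ofReal_ne_zero.mpr (hr j).ne']
    push_cast; ring
  rw [Finset.sum_congr rfl fun j _ ↦ hterm j, ← ha, Complex.real_smul]
  push_cast
  field_simp

lemma two_mul_pi_div_le {η : ℝ} (hη₀ : 0 < η) (hη : η < π / 2) {N : ℕ} (h : π ≤ η * (N + 1)) :
    2 * π / (3 * η) ≤ N := by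
  have hN : (2 : ℝ) ≤ N := by
    by_contra! hN
    have : (N : ℝ) ≤ 1 := by exact_mod_cast Nat.lt_succ_iff.mp (by exact_mod_cast hN)
    nlinarith
  rw [div_le_iff₀ (by positivity)]
  nlinarith

end InvariantCone

open InvariantCone

theorem invariant_cone_side_bound_general
    (B : Matrix (Fin 3) (Fin 3) ℝ) (lam : ℝ) (δ : ℂ)
    (hlam : 1 < lam) (him : 0 < δ.im) (habs : ‖δ‖ < lam)
    -- the eigenvalues of B̂ are λ, δ and δ̄ :
    (hchar : (B.map (Complex.ofReal)).charpoly =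
      (X - C (lam : ℂ)) * (X - C δ) * (X - C ((starRingEnd ℂ) δ)))
    (η : ℝ) (hη : η = |Real.arctan ((1 - (δ / (lam : ℂ)).re) / (δ / (lam : ℂ)).im)|)
    -- a fixed eigenvector v for λ :
    (v : Fin 3 → ℝ) (hv : v ≠ 0) (hveig : B.mulVec v = lam • v)
    (M : ℕ) (z : Fin M → Fin 3 → ℝ)
    -- (i) each zᵢ lies in the positive half-space E: its projection onto the λ-eigenline
    -- along the B̂-invariant complement (the kernel of B² - 2Re(δ)B + |δ|²I) is a
    -- positive multiple of v :
    (hE : ∀ i, ∃ r : ℝ, 0 < r ∧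
      z i - r • v ∈ LinearMap.ker (Matrix.toLin'
        (B * B - (2 * δ.re) • B + ((‖δ‖) ^ 2) • (1 : Matrix (Fin 3) (Fin 3) ℝ))))
    -- (ii) the conical hull Ĉ of the zᵢ is invariant under B̂ :
    (hinv : ∀ x ∈ {x : Fin 3 → ℝ | ∃ ε : Fin M → ℝ, (∀ i, 0 ≤ ε i) ∧ x = ∑ i, ε i • z i},
      B.mulVec x ∈ {x : Fin 3 → ℝ | ∃ ε : Fin M → ℝ, (∀ i, 0 ≤ ε i) ∧ x = ∑ i, ε i • z i})
    -- (iii) Ĉ is non-degenerate: the zᵢ span ℝ³ :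
    (hspan : Submodule.span ℝ (Set.range z) = ⊤) :
    2 * Real.pi / (3 * η) ≤ (M : ℝ) := by
  have hlam₀ : 0 < lam := by linarith
  set t : ℂ := δ / lam
  have ht : 0 < t.im := by rw [Complex.div_ofReal_im]; exact div_pos him hlam₀
  have ht' : t.re < 1 := (Complex.re_le_norm t).trans_lt <| by
    rwa [norm_div, Complex.norm_real, Real.norm_of_nonneg hlam₀.le, div_lt_one hlam₀]
  have hκ : 0 < arctan ((1 - t.re) / t.im) := arctan_pos.mpr (div_pos (by linarith) ht)
  obtain ⟨F, hF₀, hFB⟩ := exists_linearMap_mulVec_eq_mul B (δ := δ) (by simp [hchar])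
  choose r hr hrz using hE
  set ζ : Fin M → ℂ := fun i ↦ F (z i) / r i
  have hζ : ∃ i, ζ i ≠ 0 := by
    by_contra! h
    exact hF₀ (LinearMap.ext_on_range hspan fun i ↦ by simpa [ζ, (hr i).ne'] using h i)
  have hζt (i : Fin M) : t * ζ i ∈ convexHull ℝ (range ζ) := by
    obtain ⟨ε, hε, hBz⟩ := hinv (z i) ⟨Pi.single i 1, fun j ↦ by
      rw [Pi.single_apply]; split_ifs <;> norm_num,
      by simp [Pi.single_apply]⟩
    exact div_mul_div_mem_convexHull hr hε hlam₀ (by rw [← hFB, hBz, map_sum]; simp)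
      (mul_eq_sum_of_mulVec_eq_sum him.ne' hv hveig hrz hBz)
  have hplanar := pi_le_arctan_mul_card_add_one (Z := Finset.univ.image ζ) ht ht'
    (by simpa using hζ) (by simpa using hζt)
  have hcard : (Finset.univ.image ζ).card ≤ M := Finset.card_image_le.trans (by simp)
  rw [hη, abs_of_pos hκ]
  refine two_mul_pi_div_le hκ (arctan_lt_pi_div_two _) (hplanar.trans ?_)
  gcongr

theorem invariant_cone_side_bound
    (B : Matrix (Fin 3) (Fin 3) ℝ) (lam : ℝ) (δ : ℂ)
    (hlam : 1 < lam) (him : 0 < δ.im) (habs : ‖δ‖ < lam)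
    -- the eigenvalues of B̂ are λ, δ and δ̄ :
    (hchar : (B.map (Complex.ofReal)).charpoly =
      (X - C (lam : ℂ)) * (X - C δ) * (X - C ((starRingEnd ℂ) δ)))
    (η : ℝ) (hη : η = |Real.arctan ((1 - (δ / (lam : ℂ)).re) / (δ / (lam : ℂ)).im)|)
    (hη1 : η ≤ 1)
    -- a fixed eigenvector v for λ :
    (v : Fin 3 → ℝ) (hv : v ≠ 0) (hveig : B.mulVec v = lam • v)
    (M : ℕ) (z : Fin M → Fin 3 → ℝ)
    -- (i) each zᵢ lies in the positive half-space E: its projection onto the λ-eigenline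
    -- along the B̂-invariant complement (the kernel of B² - 2Re(δ)B + |δ|²I) is a
    -- positive multiple of v :
    (hE : ∀ i, ∃ r : ℝ, 0 < r ∧
      z i - r • v ∈ LinearMap.ker (Matrix.toLin'
        (B * B - (2 * δ.re) • B + ((‖δ‖) ^ 2) • (1 : Matrix (Fin 3) (Fin 3) ℝ))))
    -- (ii) the conical hull Ĉ of the zᵢ is invariant under B̂ :
    (hinv : ∀ x ∈ {x : Fin 3 → ℝ | ∃ ε : Fin M → ℝ, (∀ i, 0 ≤ ε i) ∧ x = ∑ i, ε i • z i},
      B.mulVec x ∈ {x : Fin 3 → ℝ | ∃ ε : Fin M → ℝ, (∀ i, 0 ≤ ε i) ∧ x = ∑ i, ε i • z i})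
    -- (iii) Ĉ is non-degenerate: the zᵢ span ℝ³ :
    (hspan : Submodule.span ℝ (Set.range z) = ⊤) :
    2 * Real.pi / (3 * η) ≤ (M : ℝ) :=
  invariant_cone_side_bound_general B lam δ hlam him habs hchar η hη v hv hveig M z hE hinv hspan
end

section
/- Let P ⊂ ℂ be a non-degenerate convex polygon with M vertices (the convex hull of M points, having nonempty interior) that contains the origin. Let t be a complex number with Im(t) ≠ 0 and Re(t) > 0 such that tP ⊆ P (P is invariant under multiplication by t). Set η = |arctan((1 − Re(t)) / Im(t))| and assume η ≤ 1. Then M ≥ 2π/(3η). -/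
/-!
Let `h(φ) = max_j ⟪p_j, exp (φ i)⟫` be the support function of `P`; after conjugating everything
we may assume `Im t > 0`. Since `P` contains a nonzero point `z` and the iterates `t^k z` turn
around the origin by `arg t ∈ (0, π)`, `h > 0`. The circle is then covered by at most `M + 1`
consecutive arcs on each of which a single vertex `v = r exp (A i)` attains the maximum, so that
`h(φ) = r cos (φ - A)` there. Writing such an arc as `[A - α, A + β]`, the condition `t v ∈ P` at
its right end says `β ≤ η`, and concavity of `log ∘ cos` gives
`log cos β - log cos α ≥ (α + β - 2η) tan η`. Summed over the arcs, the left side telescopes to `0`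
by periodicity of `log h`, while the lengths `α + β` add up to `2π`. Hence `π ≤ (M + 1) η`, which
gives the claim because `η ≤ 1 < π / 3`.
-/

open Real Set Filter Topology ComplexConjugate

namespace InvariantPolygon

lemma exists_mem_ne_of_interior_nonempty {X : Type*} [TopologicalSpace X] {s : Set X} (x : X)
    [(𝓝[≠] x).NeBot] (hs : (interior s).Nonempty) : ∃ y ∈ s, y ≠ x := by
  by_contra! h
  simpa [interior_singleton] using hs.mono (interior_mono (show s ⊆ {x} from h))

lemma mem_convexHull_range_conj {ι : Type*} (p : ι → ℂ) (w : ℂ) :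
    w ∈ convexHull ℝ (range (conj ∘ p)) ↔ conj w ∈ convexHull ℝ (range p) := by
  have h : conj '' convexHull ℝ (range p) = convexHull ℝ (conj '' range p) :=
    Complex.conjLIE.toLinearEquiv.toLinearMap.image_convexHull (range p)
  rw [range_comp, ← h]
  exact mem_image_iff_of_inverse star_involutive.leftInverse star_involutive.rightInverse

lemma exists_nat_cos_pos (γ : ℝ) {θ : ℝ} (hθ0 : 0 < θ) (hθπ : θ < π) :
    ∃ k : ℕ, 0 < cos (γ + k * θ) := by
  obtain ⟨m, hm⟩ := exists_nat_ge ((γ + π / 2) / (2 * π))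
  rw [div_le_iff₀ (by positivity)] at hm
  obtain ⟨y, rfl⟩ : ∃ y, γ = m * (2 * π) - π / 2 - y := ⟨m * (2 * π) - π / 2 - γ, by ring⟩
  have hy : 0 ≤ y / θ := div_nonneg (by linarith) hθ0.le
  refine ⟨⌊y / θ⌋₊ + 1, ?_⟩
  have h1 : y < (⌊y / θ⌋₊ + 1 : ℕ) * θ := by
    rw [← div_lt_iff₀ hθ0]; push_cast; exact Nat.lt_floor_add_one _
  have h2 : ((⌊y / θ⌋₊ + 1 : ℕ) : ℝ) * θ ≤ y + θ := by
    push_cast; nlinarith [Nat.floor_le hy, div_mul_cancel₀ y hθ0.ne']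
  rw [← cos_sub_nat_mul_two_pi _ m]
  exact cos_pos_of_mem_Ioo ⟨by linarith, by linarith⟩

lemma abs_lt_pi_div_two_of_cos_pos {x : ℝ} (hx : |x| ≤ π) (hcos : 0 < cos x) : |x| < π / 2 := by
  by_contra! h
  rw [← cos_abs] at hcos
  linarith [cos_nonpos_of_pi_div_two_le_of_le h (by linarith [pi_pos])]

lemma log_cos_le_sub_mul_tan {a x : ℝ} (ha : a ∈ Ioo (-(π / 2)) (π / 2))
    (hx : x ∈ Ioo (-(π / 2)) (π / 2)) : log (cos x) ≤ log (cos a) - (x - a) * tan a := by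
  have hpos : cos '' Ioo (-(π / 2)) (π / 2) ⊆ Ioi 0 :=
    image_subset_iff.2 fun _ hy => cos_pos_of_mem_Ioo hy
  have hconc : ConcaveOn ℝ (Ioo (-(π / 2)) (π / 2)) (fun y => log (cos y)) :=
    ConcaveOn.comp (strictConcaveOn_log_Ioi.concaveOn.subset hpos
        (isPreconnected_Ioo.image _ continuous_cos.continuousOn).convex)
      (strictConcaveOn_cos_Icc.concaveOn.subset Ioo_subset_Icc_self (convex_Ioo _ _))
      (strictMonoOn_log.monotoneOn.mono hpos)
  have hderiv : HasDerivAt (fun y => log (cos y)) (-tan a) a := by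
    simpa [tan_eq_sin_div_cos, neg_div] using (hasDerivAt_cos a).log (cos_pos_of_mem_Ioo ha).ne'
  rcases lt_trichotomy a x with hax | rfl | hxa
  · have := hconc.slope_le_of_hasDerivAt ha hx hax hderiv
    rw [slope_def_field, div_le_iff₀ (sub_pos.2 hax)] at this
    linarith
  · simp
  · have := hconc.le_slope_of_hasDerivAt hx ha hxa hderiv
    rw [slope_def_field, le_div_iff₀ (sub_pos.2 hxa)] at this
    linarith

lemma sub_mul_tan_le_log_cos_sub_log_cos {α β η : ℝ} (hα : α ∈ Ioo (-(π / 2)) (π / 2))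
    (hβ : β ∈ Ioo (-(π / 2)) (π / 2)) (hβη : β ≤ η) (hη0 : 0 ≤ η) (hηπ : η < π / 2)
    (hαβ : 0 ≤ α + β) : (α + β - 2 * η) * tan η ≤ log (cos β) - log (cos α) := by
  have hη : η ∈ Ioo (-(π / 2)) (π / 2) := ⟨by linarith, hηπ⟩
  have htan : 0 ≤ tan η := tan_nonneg_of_nonneg_of_le_pi_div_two hη0 hηπ.le
  rcases le_or_gt (-η) β with hβ_ge | hβ_lt
  · have h1 := log_cos_le_sub_mul_tan hη hα
    have h2 : log (cos η) ≤ log (cos β) := by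
      refine log_le_log (cos_pos_of_mem_Ioo hη) ?_
      rw [← cos_abs β]
      exact cos_le_cos_of_nonneg_of_le_pi (abs_nonneg _) (by linarith) (abs_le.2 ⟨hβ_ge, hβη⟩)
    nlinarith
  · have hnegβ : -β ∈ Ioo (-(π / 2)) (π / 2) := ⟨by linarith [hβ.2], by linarith [hβ.1]⟩
    have h1 := log_cos_le_sub_mul_tan hnegβ hα
    rw [cos_neg] at h1
    have h2 : tan η ≤ tan (-β) := strictMonoOn_tan.monotoneOn hη hnegβ (by linarith)
    nlinarith [mul_le_mul_of_nonneg_left h2 hαβ]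

lemma le_arctan_of_mul_cos_add_mul_sin_le {u w x : ℝ} (hw : 0 < w) (hx : |x| < π / 2)
    (h : u * cos x + w * sin x ≤ cos x) : x ≤ arctan ((1 - u) / w) := by
  obtain ⟨hx₁, hx₂⟩ := abs_lt.1 hx
  rw [← arctan_tan hx₁ hx₂]
  refine arctan_strictMono.monotone ?_
  rw [tan_eq_sin_div_cos, div_le_div_iff₀ (cos_pos_of_mem_Ioo ⟨hx₁, hx₂⟩) hw]
  linarith

noncomputable def dirComp (φ : ℝ) (z : ℂ) : ℝ := z.re * cos φ + z.im * sin φ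

lemma dirComp_add_pi (φ : ℝ) (z : ℂ) : dirComp (φ + π) z = -dirComp φ z := by
  simp only [dirComp, cos_add_pi, sin_add_pi]; ring

lemma dirComp_add_two_pi (φ : ℝ) (z : ℂ) : dirComp (φ + 2 * π) z = dirComp φ z := by
  rw [two_mul, ← add_assoc, dirComp_add_pi, dirComp_add_pi, neg_neg]

lemma continuous_dirComp (z : ℂ) : Continuous (dirComp · z) := by
  unfold dirComp; fun_prop

lemma dirComp_mul_ofReal_mul_exp (t : ℂ) (r A φ : ℝ) :
    dirComp φ (t * (r * Complex.exp (A * Complex.I))) =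
      r * (t.re * cos (φ - A) + t.im * sin (φ - A)) := by
  simp only [dirComp, Complex.mul_re, Complex.mul_im, Complex.ofReal_re, Complex.ofReal_im,
    Complex.exp_ofReal_mul_I_re, Complex.exp_ofReal_mul_I_im, cos_sub, sin_sub]
  ring

lemma dirComp_ofReal_mul_exp (r A φ : ℝ) :
    dirComp φ (r * Complex.exp (A * Complex.I)) = r * cos (φ - A) := by
  simpa using dirComp_mul_ofReal_mul_exp 1 r A φ

lemma sin_sub_mul_dirComp (a b x : ℝ) (z : ℂ) :
    sin (b - a) * dirComp x z = sin (b - x) * dirComp a z + sin (x - a) * dirComp b z := by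
  simp only [dirComp, sin_sub]; ring

lemma isLinearMap_dirComp (φ : ℝ) : IsLinearMap ℝ (dirComp φ) where
  map_add z w := by simp only [dirComp, Complex.add_re, Complex.add_im]; ring
  map_smul c z := by simp only [dirComp, Complex.smul_re, Complex.smul_im, smul_eq_mul]; ring

lemma exists_dirComp_le_of_mem_convexHull {ι : Type*} {p : ι → ℂ} {w : ℂ}
    (hw : w ∈ convexHull ℝ (range p)) (φ : ℝ) : ∃ k, dirComp φ w ≤ dirComp φ (p k) := by
  obtain ⟨_, ⟨k, rfl⟩, hk⟩ := ((isLinearMap_dirComp φ).mk' _).convexOn convex_univ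
    |>.exists_ge_of_mem_convexHull (subset_univ _) hw
  exact ⟨k, hk⟩

lemma pow_mul_eq_ofReal_mul_exp (t z : ℂ) (k : ℕ) :
    t ^ k * z = ((‖t‖ ^ k * ‖z‖ : ℝ) : ℂ) * Complex.exp ((z.arg + k * t.arg : ℝ) * Complex.I) := by
  conv_lhs => rw [← Complex.norm_mul_exp_arg_mul_I t, ← Complex.norm_mul_exp_arg_mul_I z]
  rw [mul_pow, ← Complex.exp_nat_mul]
  push_cast
  rw [show ((z.arg : ℂ) + k * t.arg) * Complex.I = k * (t.arg * Complex.I) + z.arg * Complex.I by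
    ring, Complex.exp_add]
  ring

lemma exists_dirComp_pos_of_mul_mem {S : Set ℂ} {t z : ℂ} (ht : 0 < t.im)
    (hS : ∀ w ∈ S, t * w ∈ S) (hz : z ∈ S) (hz0 : z ≠ 0) (φ : ℝ) : ∃ w ∈ S, 0 < dirComp φ w := by
  have harg0 : 0 < t.arg := (Complex.arg_nonneg_iff.2 ht.le).lt_of_ne
    fun h => ht.ne' (Complex.arg_eq_zero_iff.1 h.symm).2
  have hargπ : t.arg < π := Complex.arg_lt_pi_iff.2 (Or.inr ht.ne')
  obtain ⟨k, hk⟩ := exists_nat_cos_pos (z.arg - φ) harg0 hargπ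
  have hmem : ∀ n : ℕ, t ^ n * z ∈ S := fun n => by
    induction n with
    | zero => simpa using hz
    | succ n ih => simpa [pow_succ', mul_assoc] using hS _ ih
  refine ⟨t ^ k * z, hmem k, ?_⟩
  have ht0 : t ≠ 0 := by rintro rfl; simp at ht
  rw [pow_mul_eq_ofReal_mul_exp, dirComp_ofReal_mul_exp, ← cos_neg]
  refine mul_pos (by positivity) ?_
  rwa [show -(φ - (z.arg + k * t.arg)) = z.arg - φ + k * t.arg by ring]

lemma exists_polar_of_dirComp_pos {v : ℂ} {φ : ℝ} (h : 0 < dirComp φ v) :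
    ∃ r A : ℝ, 0 < r ∧ v = r * Complex.exp (A * Complex.I) ∧ |φ - A| < π / 2 := by
  set k := round ((φ - v.arg) / (2 * π))
  have hv : v = ‖v‖ * Complex.exp ((v.arg + k * (2 * π) : ℝ) * Complex.I) := by
    push_cast
    rw [add_mul, Complex.exp_add, mul_assoc (k : ℂ), Complex.exp_int_mul_two_pi_mul_I, mul_one,
      Complex.norm_mul_exp_arg_mul_I]
  refine ⟨_, _, norm_pos_iff.2 (by rintro rfl; simp [dirComp] at h), hv,
    abs_lt_pi_div_two_of_cos_pos ?_ ?_⟩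
  · have := abs_sub_round ((φ - v.arg) / (2 * π))
    rw [show φ - (v.arg + k * (2 * π)) = ((φ - v.arg) / (2 * π) - k) * (2 * π) by field_simp; ring,
      abs_mul, abs_of_pos two_pi_pos]
    nlinarith [pi_pos]
  · rw [hv, dirComp_ofReal_mul_exp] at h
    exact pos_of_mul_pos_right h (norm_nonneg _)

lemma sub_mul_tan_le_log_dirComp_sub_log_dirComp {t v : ℂ} {a b η : ℝ} (ht : 0 < t.im)
    (hab : a ≤ b) (hba : b - a < π) (ha : 0 < dirComp a v) (hb : 0 < dirComp b v)
    (hinv : dirComp b (t * v) ≤ dirComp b v) (hη : arctan ((1 - t.re) / t.im) ≤ η)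
    (hη0 : 0 ≤ η) (hηπ : η < π / 2) :
    (b - a - 2 * η) * tan η ≤ log (dirComp b v) - log (dirComp a v) := by
  obtain ⟨r, A, hr, rfl, hA⟩ := exists_polar_of_dirComp_pos hb
  rw [dirComp_ofReal_mul_exp, ← cos_neg, neg_sub] at ha
  rw [dirComp_ofReal_mul_exp] at hb
  rw [dirComp_mul_ofReal_mul_exp, dirComp_ofReal_mul_exp] at hinv
  rw [dirComp_ofReal_mul_exp, dirComp_ofReal_mul_exp, ← cos_neg (a - A), neg_sub]
  have hcosβ : 0 < cos (b - A) := pos_of_mul_pos_right hb hr.le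
  have hcosα : 0 < cos (A - a) := pos_of_mul_pos_right ha hr.le
  obtain ⟨hβ₁, hβ₂⟩ := abs_lt.1 hA
  have hα : A - a ∈ Ioo (-(π / 2)) (π / 2) := by
    refine ⟨by linarith, not_le.1 fun h => ?_⟩
    linarith [cos_nonpos_of_pi_div_two_le_of_le h (by linarith)]
  have hβη : b - A ≤ η :=
    (le_arctan_of_mul_cos_add_mul_sin_le ht hA (le_of_mul_le_mul_left hinv hr)).trans hη
  rw [log_mul hr.ne' hcosβ.ne', log_mul hr.ne' hcosα.ne', add_sub_add_left_eq_sub]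
  simpa using sub_mul_tan_le_log_cos_sub_log_cos hα ⟨hβ₁, hβ₂⟩ hβη hη0 hηπ (by linarith)

section ArcCover

variable {ι : Type*} {S : ι → Set ℝ} {L : ℝ}

def IsMaxStep (S : ι → Set ℝ) (L x : ℝ) (j : ι) (y : ℝ) : Prop :=
  x ∈ S j ∧ y ∈ S j ∧ x < y ∧ y < x + L ∧ ∀ e ∈ S j, x ≤ e → e < x + L → e ≤ y

lemma exists_mem_and_mem_Ioo_of_cover [Finite ι] (hclosed : ∀ j, IsClosed (S j))
    (hcover : ∀ x, ∃ j, x ∈ S j) (hL : 0 < L) (x : ℝ) :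
    ∃ j, x ∈ S j ∧ ∃ y ∈ S j, x < y ∧ y < x + L := by
  obtain ⟨j, hj⟩ : ∃ j, ∃ᶠ y in 𝓝[>] x, y ∈ S j := by
    by_contra! h
    obtain ⟨y, hy⟩ := (eventually_all.2 h).exists
    obtain ⟨j, hj⟩ := hcover y
    exact hy j hj
  refine ⟨j, (hclosed j).closure_subset (hj.filter_mono nhdsWithin_le_nhds).mem_closure, ?_⟩
  obtain ⟨y, hy, hxy⟩ := (hj.and_eventually (Ioo_mem_nhdsGT (by linarith : x < x + L))).exists
  exact ⟨y, hy, hxy⟩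

lemma exists_isMaxStep_of_cover [Finite ι] (hclosed : ∀ j, IsClosed (S j))
    (hcover : ∀ x, ∃ j, x ∈ S j) (hanti : ∀ j, ∀ x ∈ S j, x + L ∉ S j) (hL : 0 < L) (x : ℝ) :
    ∃ j y, IsMaxStep S L x j y := by
  obtain ⟨j, hx, y, hy, hxy, hyL⟩ := exists_mem_and_mem_Ioo_of_cover hclosed hcover hL x
  have hD : IsCompact (S j ∩ Icc x (x + L)) := isCompact_Icc.inter_left (hclosed j)
  have hmem : sSup (S j ∩ Icc x (x + L)) ∈ S j ∩ Icc x (x + L) :=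
    hD.sSup_mem ⟨x, hx, le_rfl, by linarith⟩
  have hle : ∀ e ∈ S j ∩ Icc x (x + L), e ≤ sSup (S j ∩ Icc x (x + L)) :=
    fun e he => le_csSup hD.bddAbove he
  refine ⟨j, _, hx, hmem.1, hxy.trans_le (hle y ⟨hy, hxy.le, by linarith⟩),
    hmem.2.2.lt_of_ne fun h => hanti j x hx (h ▸ hmem.1),
    fun e he hxe hex => hle e ⟨he, hxe, hex.le⟩⟩

lemma add_two_mul_le_of_eq {s : ℕ → ℝ} {idx : ℕ → ι}
    (hconv : ∀ j, ∀ a ∈ S j, ∀ b ∈ S j, b - a < L → Icc a b ⊆ S j)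
    (hanti : ∀ j, ∀ x ∈ S j, x + L ∉ S j) (hper : ∀ j, ∀ x ∈ S j, x + 2 * L ∈ S j)
    (hstep : ∀ n, IsMaxStep S L (s n) (idx n) (s (n + 1))) {n m : ℕ} (hnm : n < m)
    (h : idx n = idx m) : s n + 2 * L ≤ s (m + 1) := by
  have hmono : StrictMono s := strictMono_nat_of_lt_succ fun k => (hstep k).2.2.1
  obtain ⟨hn, -, -, -, hmaxn⟩ := hstep n
  obtain ⟨hm, hm', hmm', hm'L, hmaxm⟩ := hstep m
  rw [← h] at hm hm' hmaxm
  have hnm' : s (n + 1) ≤ s m := hmono.monotone hnm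
  have h1 : s n + L ≤ s (m + 1) := by
    by_contra! h1
    have := hmaxn _ hm' (by linarith [hmono hnm]) h1
    linarith
  have h2 : s n + L < s m := by
    by_contra! h2
    exact hanti _ _ hn (hconv _ _ hm _ hm' (by linarith) ⟨h2, h1⟩)
  by_contra! h3
  have := hmaxm _ (hper _ _ hn) (by linarith) (by linarith)
  linarith

theorem exists_partition_of_cover [Fintype ι] (hL : 0 < L) (hclosed : ∀ j, IsClosed (S j))
    (hcover : ∀ x, ∃ j, x ∈ S j) (hconv : ∀ j, ∀ a ∈ S j, ∀ b ∈ S j, b - a < L → Icc a b ⊆ S j)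
    (hanti : ∀ j, ∀ x ∈ S j, x + L ∉ S j) (hper : ∀ j, ∀ x ∈ S j, x + 2 * L ∈ S j) :
    ∃ N ≤ Fintype.card ι + 1, ∃ (s : ℕ → ℝ) (idx : ℕ → ι), s 0 = 0 ∧ s N = 2 * L ∧
      ∀ i < N, s i ≤ s (i + 1) ∧ s (i + 1) < s i + L ∧ s i ∈ S (idx i) ∧ s (i + 1) ∈ S (idx i) := by
  choose next₁ next₂ hnext using exists_isMaxStep_of_cover hclosed hcover hanti hL
  set s : ℕ → ℝ := fun n => next₂^[n] 0
  have hstep : ∀ n, IsMaxStep S L (s n) (next₁ (s n)) (s (n + 1)) := fun n => by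
    simpa only [s, Function.iterate_succ_apply'] using hnext (s n)
  have hmono : StrictMono s := strictMono_nat_of_lt_succ fun k => (hstep k).2.2.1
  have hs0 : s 0 = 0 := rfl
  have hreach : ∃ n ≤ Fintype.card ι + 1, 2 * L ≤ s n := by
    -- Some set is used twice within the first `card ι + 1` steps, so the chain has wrapped around.
    obtain ⟨a, b, hab, heq⟩ := Fintype.exists_ne_map_eq_of_card_lt
      (fun k : Fin (Fintype.card ι + 1) => next₁ (s k)) (by simp)
    wlog hlt : (a : ℕ) < b generalizing a b
    · exact this b a hab.symm heq.symm
        ((not_lt.1 hlt).lt_of_ne (Fin.val_injective.ne hab.symm))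
    refine ⟨b + 1, by omega, ?_⟩
    have := add_two_mul_le_of_eq hconv hanti hper hstep hlt heq
    linarith [hmono.monotone (Nat.zero_le a)]
  classical
  have hreach' : ∃ n, 2 * L ≤ s n := hreach.imp fun _ hn => hn.2
  refine ⟨Nat.find hreach', ?_, fun i => min (s i) (2 * L), fun i => next₁ (s i), ?_, ?_, ?_⟩
  · obtain ⟨n, hn, hsn⟩ := hreach
    exact (Nat.find_min' hreach' hsn).trans hn
  · simp [hs0, hL.le]
  · exact min_eq_right (Nat.find_spec hreach')
  intro i hi
  have hsi : s i < 2 * L := not_le.1 (Nat.find_min hreach' hi)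
  obtain ⟨hi₀, hi₁, hlt, hlt', -⟩ := hstep i
  simp only [min_eq_left hsi.le]
  refine ⟨le_min hlt.le hsi.le, (min_le_left _ _).trans_lt hlt', hi₀,
    hconv _ _ hi₀ _ hi₁ (by linarith) ⟨le_min hlt.le hsi.le, min_le_left _ _⟩⟩

end ArcCover

section SupportVertex

variable {ι : Type*}

def IsSupportVertex (p : ι → ℂ) (j : ι) (φ : ℝ) : Prop := ∀ k, dirComp φ (p k) ≤ dirComp φ (p j)

noncomputable def supportFun (p : ι → ℂ) (φ : ℝ) : ℝ := ⨆ j, dirComp φ (p j)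

variable {p : ι → ℂ} {j : ι} {φ : ℝ}

lemma supportFun_periodic (p : ι → ℂ) : Function.Periodic (supportFun p) (2 * π) := fun φ => by
  simp only [supportFun, dirComp_add_two_pi]

lemma isClosed_setOf_isSupportVertex (j : ι) : IsClosed {φ | IsSupportVertex p j φ} := by
  simp only [IsSupportVertex, ofPred_forall]
  exact isClosed_iInter fun k => isClosed_le (continuous_dirComp _) (continuous_dirComp _)

lemma exists_isSupportVertex [Finite ι] [Nonempty ι] (φ : ℝ) : ∃ j, IsSupportVertex p j φ :=
  Finite.exists_max fun j => dirComp φ (p j)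

lemma IsSupportVertex.dirComp_eq_supportFun [Finite ι] (h : IsSupportVertex p j φ) :
    dirComp φ (p j) = supportFun p φ :=
  haveI : Nonempty ι := ⟨j⟩
  le_antisymm (le_ciSup (f := fun k => dirComp φ (p k)) (Finite.bddAbove_range _) j) (ciSup_le h)

lemma IsSupportVertex.add_two_pi (h : IsSupportVertex p j φ) :
    IsSupportVertex p j (φ + 2 * π) := fun k => by
  simpa only [dirComp_add_two_pi] using h k

lemma IsSupportVertex.of_mem_Icc {a b x : ℝ} (ha : IsSupportVertex p j a)
    (hb : IsSupportVertex p j b) (hba : b - a < π) (hx : x ∈ Icc a b) : IsSupportVertex p j x := by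
  intro k
  rcases hx.1.eq_or_lt with rfl | hax
  · exact ha k
  obtain ⟨-, hxb⟩ := hx
  refine le_of_mul_le_mul_left ?_ (sin_pos_of_pos_of_lt_pi (by linarith) hba)
  rw [sin_sub_mul_dirComp a b x, sin_sub_mul_dirComp a b x]
  have hsin₁ : 0 ≤ sin (b - x) := sin_nonneg_of_nonneg_of_le_pi (by linarith) (by linarith)
  have hsin₂ : 0 ≤ sin (x - a) := sin_nonneg_of_nonneg_of_le_pi (by linarith) (by linarith)
  gcongr
  exacts [ha k, hb k]

lemma IsSupportVertex.dirComp_pos (hpos : ∀ φ, ∃ k, 0 < dirComp φ (p k))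
    (h : IsSupportVertex p j φ) : 0 < dirComp φ (p j) :=
  let ⟨k, hk⟩ := hpos φ
  hk.trans_le (h k)

lemma IsSupportVertex.not_add_pi (hpos : ∀ φ, ∃ k, 0 < dirComp φ (p k))
    (h : IsSupportVertex p j φ) : ¬IsSupportVertex p j (φ + π) := fun h' => by
  have := h'.dirComp_pos hpos
  rw [dirComp_add_pi] at this
  linarith [h.dirComp_pos hpos]

end SupportVertex

theorem pi_le_mul_of_im_pos {ι : Type*} [Fintype ι] (p : ι → ℂ) {t z : ℂ} (ht : 0 < t.im)
    (hinv : ∀ w ∈ convexHull ℝ (range p), t * w ∈ convexHull ℝ (range p))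
    (hz : z ∈ convexHull ℝ (range p)) (hz0 : z ≠ 0) {η : ℝ}
    (hη : arctan ((1 - t.re) / t.im) ≤ η) (hη0 : 0 < η) (hηπ : η < π / 2) :
    π ≤ (Fintype.card ι + 1) * η := by
  have hpos : ∀ φ, ∃ k, 0 < dirComp φ (p k) := fun φ => by
    obtain ⟨w, hw, hw0⟩ := exists_dirComp_pos_of_mul_mem ht hinv hz hz0 φ
    obtain ⟨k, hk⟩ := exists_dirComp_le_of_mem_convexHull hw φ
    exact ⟨k, hw0.trans_le hk⟩
  have : Nonempty ι := ⟨(hpos 0).choose⟩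
  obtain ⟨N, hN, s, idx, hs0, hsN, hs⟩ := exists_partition_of_cover pi_pos
    isClosed_setOf_isSupportVertex exists_isSupportVertex
    (fun _ _ ha _ hb hba _ hx => ha.of_mem_Icc hb hba hx) (fun _ _ h => h.not_add_pi hpos)
    (fun _ _ h => h.add_two_pi)
  have harc : ∀ i ∈ Finset.range N, (s (i + 1) - s i - 2 * η) * tan η ≤
      log (supportFun p (s (i + 1))) - log (supportFun p (s i)) := by
    intro i hi
    obtain ⟨hle, hlt, ha, hb⟩ := hs i (Finset.mem_range.1 hi)
    obtain ⟨k, hk⟩ := exists_dirComp_le_of_mem_convexHull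
      (hinv _ (subset_convexHull ℝ _ (mem_range_self (idx i)))) (s (i + 1))
    rw [← ha.dirComp_eq_supportFun, ← hb.dirComp_eq_supportFun]
    exact sub_mul_tan_le_log_dirComp_sub_log_dirComp ht hle (by linarith) (ha.dirComp_pos hpos)
      (hb.dirComp_pos hpos) (hk.trans (hb k)) hη hη0.le hηπ
  have hsum := Finset.sum_le_sum harc
  rw [← Finset.sum_mul, Finset.sum_sub_distrib, Finset.sum_range_sub (fun i => s i),
    Finset.sum_range_sub (fun i => log (supportFun p (s i))), hs0, hsN, (supportFun_periodic p).eq,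
    Finset.sum_const, Finset.card_range, nsmul_eq_mul, sub_self, sub_zero] at hsum
  have hπ : π ≤ N * η := by nlinarith [tan_pos_of_pos_of_lt_pi_div_two hη0 hηπ]
  have hN' : (N : ℝ) ≤ Fintype.card ι + 1 := by exact_mod_cast hN
  nlinarith

theorem pi_le_mul_of_im_ne_zero {ι : Type*} [Fintype ι] (p : ι → ℂ) {t z : ℂ} (ht : t.im ≠ 0)
    (hinv : ∀ w ∈ convexHull ℝ (range p), t * w ∈ convexHull ℝ (range p))
    (hz : z ∈ convexHull ℝ (range p)) (hz0 : z ≠ 0) {η : ℝ}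
    (hη : |arctan ((1 - t.re) / t.im)| ≤ η) (hη0 : 0 < η) (hηπ : η < π / 2) :
    π ≤ (Fintype.card ι + 1) * η := by
  rcases ht.lt_or_gt with ht | ht
  · refine pi_le_mul_of_im_pos (conj ∘ p) (t := conj t) (z := conj z) (by simpa using ht)
      (fun w hw => ?_) ((mem_convexHull_range_conj p _).2 (by simpa using hz)) (by simpa using hz0)
      ?_ hη0 hηπ
    · rw [mem_convexHull_range_conj] at hw ⊢
      simpa using hinv _ hw
    · simpa [div_neg, arctan_neg] using (neg_le_abs _).trans hη
  · exact pi_le_mul_of_im_pos p ht hinv hz hz0 ((le_abs_self _).trans hη) hη0 hηπ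

end InvariantPolygon

theorem invariant_polygon_side_bound_general
    (M : ℕ) (p : Fin M → ℂ)
    (P : Set ℂ) (hP : P = convexHull ℝ (Set.range p))
    (hint : (interior P).Nonempty)
    (t : ℂ) (htim : t.im ≠ 0)
    (hinv : ∀ z ∈ P, t * z ∈ P)
    (η : ℝ) (hη : η = |Real.arctan ((1 - t.re) / t.im)|) (hη1 : η ≤ 1) :
    2 * Real.pi / (3 * η) ≤ (M : ℝ) := by
  subst hP
  obtain ⟨z, hz, hz0⟩ := InvariantPolygon.exists_mem_ne_of_interior_nonempty 0 hint
  obtain hη0 | hη0 := (hη ▸ abs_nonneg _ : 0 ≤ η).eq_or_lt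
  · simp [← hη0] -- `2 * π / 0 = 0`
  have h := InvariantPolygon.pi_le_mul_of_im_ne_zero p htim hinv hz hz0 hη.ge hη0
    (by linarith [pi_gt_three])
  rw [Fintype.card_fin] at h
  rw [div_le_iff₀ (by positivity)]
  nlinarith [pi_gt_three]

theorem invariant_polygon_side_bound
    (M : ℕ) (p : Fin M → ℂ)
    (P : Set ℂ) (hP : P = convexHull ℝ (Set.range p))
    (hint : (interior P).Nonempty)
    (h0 : (0 : ℂ) ∈ P)
    (t : ℂ) (htim : t.im ≠ 0) (htre : 0 < t.re)
    (hinv : ∀ z ∈ P, t * z ∈ P)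
    (η : ℝ) (hη : η = |Real.arctan ((1 - t.re) / t.im)|) (hη1 : η ≤ 1) :
    2 * Real.pi / (3 * η) ≤ (M : ℝ) :=
  invariant_polygon_side_bound_general M p P hP hint t htim hinv η hη hη1
end

section
/- Every Perron number λ of algebraic degree 2 over ℚ is the spectral radius of a 2 × 2 nonnegative integral aperiodic matrix; hence the Perron–Frobenius degree of every quadratic Perron number equals 2. -/
open Polynomial

/-! Write the minimal polynomial of `λ` as `X ^ 2 - t X + d` with `t d : ℤ`, so that the other
root is `t - λ`. The Perron condition `|t - λ| < λ` forces `t ≥ 1`, and irrationality of `λ`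
forces the discriminant `t ^ 2 - 4 d = (2 λ - t) ^ 2` to be a nonsquare, hence `≥ 2`. These two
inequalities are exactly what makes the integral conjugate of the companion matrix with diagonal
`⌊t / 2⌋, ⌈t / 2⌉` nonnegative with positive square. A `1 × 1` matrix has an integer spectral
radius, so no smaller size works. -/

lemma specRad_eq_of_charpoly_eq_mul {n : ℕ} {A : Matrix (Fin n) (Fin n) ℤ} {r : ℝ} {μ : ℂ}
    (hA : (A.map (Int.cast : ℤ → ℂ)).charpoly = (X - C (r : ℂ)) * (X - C μ)) (hμ : ‖μ‖ ≤ r) :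
    specRad A = r := by
  have hr : 0 ≤ r := (norm_nonneg μ).trans hμ
  have hroots : {s : ℝ | ∃ z : ℂ, (A.map (Int.cast : ℤ → ℂ)).charpoly.IsRoot z ∧ s = ‖z‖}
      = {r, ‖μ‖} := by
    ext s
    simp only [hA, Set.mem_ofPred_eq, Set.mem_insert_iff, Set.mem_singleton_iff, IsRoot.def,
      eval_mul, eval_sub, eval_X, eval_C, mul_eq_zero, sub_eq_zero]
    constructor
    · rintro ⟨z, rfl | rfl, rfl⟩
      · exact Or.inl (by rw [Complex.norm_real, Real.norm_of_nonneg hr])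
      · exact Or.inr rfl
    · rintro (rfl | rfl)
      · exact ⟨s, Or.inl rfl, by rw [Complex.norm_real, Real.norm_of_nonneg hr]⟩
      · exact ⟨μ, Or.inr rfl, rfl⟩
  rw [specRad, hroots, csSup_pair, sup_eq_left.mpr hμ]

lemma X_sq_sub_C_mul_X_add_C_eq_mul {R : Type*} [CommRing R] {t d r : R}
    (hr : r ^ 2 - t * r + d = 0) :
    (X ^ 2 - C t * X + C d : R[X]) = (X - C r) * (X - C (t - r)) := by
  rw [show d = r * (t - r) by linear_combination hr]
  simp only [map_sub, map_mul]
  ring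

lemma specRad_fin_two_eq {A : Matrix (Fin 2) (Fin 2) ℤ} {r : ℝ}
    (hr : r ^ 2 - A.trace * r + A.det = 0) (hconj : |A.trace - r| ≤ r) : specRad A = r := by
  refine specRad_eq_of_charpoly_eq_mul (μ := ((A.trace - r : ℝ) : ℂ)) ?_
    (by rwa [Complex.norm_real, Real.norm_eq_abs])
  rw [show A.map (Int.cast : ℤ → ℂ) = A.map (Int.castRingHom ℂ) from rfl, Matrix.charpoly_map,
    Matrix.charpoly_fin_two]
  convert X_sq_sub_C_mul_X_add_C_eq_mul (R := ℂ) (r := r) (t := A.trace) (d := A.det)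
    (by simpa using congrArg Complex.ofReal hr) using 1
  · simp
  · push_cast; rfl

lemma specRad_fin_zero (A : Matrix (Fin 0) (Fin 0) ℤ) : specRad A = 0 := by
  simp [specRad, Matrix.charpoly_isEmpty]

lemma specRad_fin_one (A : Matrix (Fin 1) (Fin 1) ℤ) : specRad A = |A 0 0| := by
  have hroots : {s : ℝ | ∃ z : ℂ, (A.map (Int.cast : ℤ → ℂ)).charpoly.IsRoot z ∧ s = ‖z‖}
      = {((|A 0 0| : ℤ) : ℝ)} := by
    ext s
    simp [Matrix.charpoly, Matrix.charmatrix_apply_eq, sub_eq_zero, Complex.norm_intCast]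
  rw [specRad, hroots, csSup_singleton, Int.cast_abs]

lemma isAperiodic_of_fin_two {a b e : ℤ} (ha : 0 ≤ a) (hb : 0 < b) (he : 0 < e) :
    IsAperiodic !![a, b; 1, e] := by
  refine ⟨2, two_pos, fun i j => ?_⟩
  rw [sq, Matrix.mul_fin_two]
  fin_cases i <;> fin_cases j <;> simp <;> nlinarith

/-- The companion matrix of `X ^ 2 - t X + d` conjugated so that the diagonal splits `t` as
evenly as possible; the upper right entry is then `⌊(t ^ 2 - 4 d) / 4⌋`. -/
def balancedCompanion (t d : ℤ) : Matrix (Fin 2) (Fin 2) ℤ :=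
  !![t / 2, t / 2 * (t - t / 2) - d; 1, t - t / 2]

lemma trace_balancedCompanion (t d : ℤ) : (balancedCompanion t d).trace = t := by
  simp [balancedCompanion, Matrix.trace_fin_two]

lemma det_balancedCompanion (t d : ℤ) : (balancedCompanion t d).det = d := by
  simp [balancedCompanion, Matrix.det_fin_two]

lemma balancedCompanion_nonneg_isAperiodic {t d : ℤ} (ht : 1 ≤ t) (hD : 2 ≤ t ^ 2 - 4 * d) :
    (∀ i j, 0 ≤ balancedCompanion t d i j) ∧ IsAperiodic (balancedCompanion t d) := by
  have hr : t - 2 * (t / 2) = 0 ∨ t - 2 * (t / 2) = 1 := by omega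
  -- `4 * b = (t ^ 2 - 4 * d) - r ^ 2` for the upper right entry `b` and `r = t - 2 * (t / 2)`
  have hb : 0 < t / 2 * (t - t / 2) - d := by
    rcases hr with hr | hr <;> nlinarith
  refine ⟨fun i j => ?_, isAperiodic_of_fin_two (by omega) hb (by omega)⟩
  fin_cases i <;> fin_cases j <;> simp [balancedCompanion] <;> omega

lemma irrational_of_natDegree_minpoly_ne_one {x : ℝ} (h : (minpoly ℚ x).natDegree ≠ 1) :
    Irrational x := by
  rintro ⟨q, rfl⟩
  exact h (by rw [show (q : ℝ) = algebraMap ℚ ℝ q from rfl, minpoly.eq_X_sub_C, natDegree_X_sub_C])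

lemma two_le_discr_of_irrational {x : ℝ} (hx : Irrational x) {t d : ℤ}
    (h : x ^ 2 - t * x + d = 0) : 2 ≤ t ^ 2 - 4 * d := by
  have hy : Irrational (2 * x - t) := (hx.natCast_mul two_ne_zero).sub_intCast t
  have hsq : (2 * x - t) ^ 2 = ((t ^ 2 - 4 * d : ℤ) : ℝ) := by
    push_cast; linear_combination 4 * h
  have hD : 0 ≤ t ^ 2 - 4 * d := by exact_mod_cast hsq ▸ sq_nonneg (2 * x - t)
  by_contra! hlt
  interval_cases hDv : t ^ 2 - 4 * d
  · exact hy.ne_zero (pow_eq_zero_iff two_ne_zero |>.mp (by simpa using hsq))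
  · rcases (by simpa using hsq : 2 * x - t = 1 ∨ 2 * x - t = -1) with h1 | h1
    · exact hy.ne_one h1
    · exact hy.ne_int (-1) (by simpa using h1)

lemma exists_minpoly_eq_quadratic {x : ℝ} (hx : IsIntegral ℤ x)
    (h2 : (minpoly ℚ x).natDegree = 2) :
    ∃ t d : ℤ, minpoly ℚ x = X ^ 2 - C (t : ℚ) * X + C (d : ℚ) := by
  have hmap := minpoly.isIntegrallyClosed_eq_field_fractions' ℚ hx
  have hmonic := minpoly.monic hx
  have hdeg : (minpoly ℤ x).natDegree = 2 := by rwa [hmap, hmonic.natDegree_map] at h2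
  have hlead : (minpoly ℤ x).coeff 2 = 1 := hdeg ▸ hmonic.coeff_natDegree
  obtain ⟨t, d, hquad⟩ : ∃ t d : ℤ, minpoly ℤ x = X ^ 2 - C t * X + C d := by
    refine ⟨-(minpoly ℤ x).coeff 1, (minpoly ℤ x).coeff 0, ?_⟩
    conv_lhs => rw [eq_quadratic_of_degree_le_two (degree_le_of_natDegree_le hdeg.le), hlead]
    simp only [map_one, one_mul, map_neg, neg_mul, sub_neg_eq_add]
  exact ⟨t, d, by simp [hmap, hquad]⟩

lemma sq_sub_mul_add_eq_zero_of_minpoly_eq {x : ℝ} {t d : ℤ}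
    (hmin : minpoly ℚ x = X ^ 2 - C (t : ℚ) * X + C (d : ℚ)) : x ^ 2 - t * x + d = 0 := by
  simpa [hmin] using minpoly.aeval ℚ x

lemma IsPerron.abs_conj_lt {lam : ℝ} (hlam : IsPerron lam) (hirr : Irrational lam) {t d : ℤ}
    (hmin : minpoly ℚ lam = X ^ 2 - C (t : ℚ) * X + C (d : ℚ)) : |t - lam| < lam := by
  have hroot := sq_sub_mul_add_eq_zero_of_minpoly_eq hmin
  have hne : ((t - lam : ℝ) : ℂ) ≠ lam := by
    intro h
    exact hirr.ne_rat ((t : ℚ) / 2) (by push_cast; linarith [Complex.ofReal_injective h])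
  have hconj := hlam.2.2 _ ?_ hne
  · rwa [Complex.norm_real, Real.norm_eq_abs] at hconj
  · simp only [hmin, map_add, map_sub, map_mul, aeval_X_pow, aeval_X, aeval_C,
      eq_ratCast, Rat.cast_intCast]
    exact_mod_cast congrArg Complex.ofReal (by linear_combination hroot :
      (t - lam) ^ 2 - t * (t - lam) + d = (0 : ℝ))

lemma dPF_eq_two_of_irrational {p : ℝ} (hp : Irrational p)
    (h2 : ∃ A : Matrix (Fin 2) (Fin 2) ℤ, (∀ i j, 0 ≤ A i j) ∧ IsAperiodic A ∧ specRad A = p) :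
    dPF p = 2 := by
  refine le_antisymm (Nat.sInf_le h2) (le_csInf ⟨2, h2⟩ ?_)
  rintro n ⟨A, -, -, hA⟩
  by_contra! hn
  interval_cases n
  · exact hp.ne_zero (by rw [← hA, specRad_fin_zero])
  · exact hp.ne_int |A 0 0| (by rw [← hA, specRad_fin_one])

theorem quadratic_perron_PF_degree_two (lam : ℝ) (hlam : IsPerron lam)
    (hdeg : (minpoly ℚ lam).natDegree = 2) :
    (∃ A : Matrix (Fin 2) (Fin 2) ℤ,
      (∀ i j, 0 ≤ A i j) ∧ IsAperiodic A ∧ specRad A = lam) ∧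
    dPF lam = 2 := by
  have hirr : Irrational lam := irrational_of_natDegree_minpoly_ne_one (by omega)
  obtain ⟨t, d, hmin⟩ := exists_minpoly_eq_quadratic hlam.2.1 hdeg
  have hroot := sq_sub_mul_add_eq_zero_of_minpoly_eq hmin
  have hconj : |t - lam| < lam := hlam.abs_conj_lt hirr hmin
  have ht : 1 ≤ t := by
    have : (0 : ℝ) < t := by linarith [(abs_lt.mp hconj).1]
    exact_mod_cast this
  obtain ⟨hnonneg, haper⟩ :=
    balancedCompanion_nonneg_isAperiodic ht (two_le_discr_of_irrational hirr hroot)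
  have hA : specRad (balancedCompanion t d) = lam :=
    specRad_fin_two_eq (by rwa [trace_balancedCompanion, det_balancedCompanion])
      (by rw [trace_balancedCompanion]; exact hconj.le)
  have hwit : ∃ A : Matrix (Fin 2) (Fin 2) ℤ,
      (∀ i j, 0 ≤ A i j) ∧ IsAperiodic A ∧ specRad A = lam :=
    ⟨_, hnonneg, haper, hA⟩
  exact ⟨hwit, dPF_eq_two_of_irrational hirr hwit⟩
end

section
/- Let γ > 2 be a Perron number such that every Galois conjugate γ' ≠ γ of γ satisfies |γ'| ≤ γ − 2. Let α be the unique real number greater than 1 satisfying α + 1/α = γ. Then α is a bi-Perron number. -/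
open Polynomial

/-- A bi-Perron number: a real algebraic unit `α > 1` (the minimal polynomial over ℚ
has constant term `±1`) all of whose Galois conjugates other than `α` and possibly
`α⁻¹` lie in the open annulus `1/α < |z| < α`. -/
def IsBiPerron (α : ℝ) : Prop :=
  1 < α ∧ IsIntegral ℤ α ∧
    ((minpoly ℚ α).coeff 0 = 1 ∨ (minpoly ℚ α).coeff 0 = -1) ∧
    ∀ z : ℂ, (Polynomial.aeval z) (minpoly ℚ α) = 0 → z ≠ (α : ℂ) → z ≠ ((α : ℂ))⁻¹ →
      1 / α < ‖z‖ ∧ ‖z‖ < α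

/-!
Put `γ = α + α⁻¹` and `P = minpoly ℤ γ`. The polynomial `X ^ deg P * P (X + X⁻¹)` has integer
coefficients, is monic with constant term `1`, and vanishes at `α`; hence `α` is an algebraic
integer whose minimal polynomial divides it and so has constant term `±1`. The same polynomial
vanishes at every conjugate `z` of `α`, so `z + z⁻¹` is a conjugate of `γ`. It equals `γ` only
for `z ∈ {α, α⁻¹}`; otherwise `|‖z‖ - ‖z‖⁻¹| ≤ ‖z + z⁻¹‖ ≤ γ - 2 < α - α⁻¹`, and since
`t ↦ t - t⁻¹` is increasing this confines `‖z‖` to `(α⁻¹, α)`.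
-/

namespace Polynomial

variable {R : Type*} [CommRing R]

/-- `X ^ n * P (X + X⁻¹)` with `n = P.natDegree`, a polynomial since `(X + X⁻¹) ^ i * X ^ n =
(X ^ 2 + 1) ^ i * X ^ (n - i)`. -/
noncomputable def joukowskiPullback (P : R[X]) : R[X] :=
  ∑ i ∈ Finset.range (P.natDegree + 1), C (P.coeff i) * (X ^ 2 + 1) ^ i * X ^ (P.natDegree - i)

theorem aeval_joukowskiPullback {K : Type*} [Field K] [Algebra R K] (P : R[X]) {z : K}
    (hz : z ≠ 0) :
    aeval z P.joukowskiPullback = z ^ P.natDegree * aeval (z + z⁻¹) P := by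
  rw [joukowskiPullback, map_sum, aeval_eq_sum_range, Finset.mul_sum]
  refine Finset.sum_congr rfl fun i hi => ?_
  have hi : i ≤ P.natDegree := Nat.lt_succ_iff.mp (Finset.mem_range.mp hi)
  have hsq : z ^ 2 + 1 = (z + z⁻¹) * z := by field_simp
  simp only [map_mul, map_pow, map_add, map_one, aeval_X, aeval_C, Algebra.smul_def]
  rw [hsq, mul_pow, ← pow_mul_pow_sub z hi]
  ring

theorem joukowskiPullback_coeff_zero (P : R[X]) :
    P.joukowskiPullback.coeff 0 = P.leadingCoeff := by
  rw [joukowskiPullback, finsetSum_coeff,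
    Finset.sum_eq_single_of_mem _ (Finset.self_mem_range_succ _)]
  · simp [coeff_zero_eq_eval_zero]
  · intro i hi hne
    have : P.natDegree - i ≠ 0 := by
      have := Finset.mem_range.mp hi
      omega
    simp [coeff_zero_eq_eval_zero, zero_pow this]

theorem Monic.joukowskiPullback {P : R[X]} (hP : P.Monic) : P.joukowskiPullback.Monic := by
  nontriviality R
  have hX : (X ^ 2 + 1 : R[X]).Monic := monic_X_pow_add_C 1 two_ne_zero
  have hXd : (X ^ 2 + 1 : R[X]).natDegree = 2 := natDegree_X_pow_add_C
  rw [Polynomial.joukowskiPullback, Finset.sum_range_succ, hP.coeff_natDegree, Nat.sub_self,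
    pow_zero, map_one, one_mul, mul_one, add_comm]
  refine (hX.pow _).add_of_left ?_
  rw [degree_eq_natDegree (hX.pow _).ne_zero, hX.natDegree_pow, hXd]
  refine (degree_sum_le _ _).trans_lt <|
    (Finset.sup_lt_iff (WithBot.bot_lt_coe _)).2 fun i hi => ?_
  have hi : i < P.natDegree := Finset.mem_range.mp hi
  have hdeg : (C (P.coeff i) * (X ^ 2 + 1) ^ i * X ^ (P.natDegree - i)).natDegree ≤
      i * 2 + (P.natDegree - i) := by
    refine natDegree_mul_le_of_le ((natDegree_C_mul_le _ _).trans ?_) (natDegree_X_pow_le _)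
    exact natDegree_pow_le.trans_eq (by rw [hXd])
  exact degree_le_natDegree.trans_lt (by exact_mod_cast hdeg.trans_lt (by omega))

end Polynomial

section JoukowskiConjugates

variable {K : Type*} [Field K] {x : K}

theorem aeval_joukowskiPullback_minpoly_add_inv (hx : x ≠ 0) :
    aeval x (minpoly ℤ (x + x⁻¹)).joukowskiPullback = 0 := by
  rw [aeval_joukowskiPullback _ hx, minpoly.aeval, mul_zero]

theorem IsIntegral.of_add_inv (hx : x ≠ 0) (hint : IsIntegral ℤ (x + x⁻¹)) : IsIntegral ℤ x :=
  ⟨_, (minpoly.monic hint).joukowskiPullback, aeval_joukowskiPullback_minpoly_add_inv hx⟩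

variable [CharZero K]

theorem minpoly_coeff_zero_eq_one_or_neg_one_of_add_inv (hx : x ≠ 0)
    (hint : IsIntegral ℤ (x + x⁻¹)) :
    (minpoly ℚ x).coeff 0 = 1 ∨ (minpoly ℚ x).coeff 0 = -1 := by
  have hxint := hint.of_add_inv hx
  obtain ⟨r, hr⟩ :=
    minpoly.isIntegrallyClosed_dvd hxint (aeval_joukowskiPullback_minpoly_add_inv hx)
  have hunit : IsUnit ((minpoly ℤ x).coeff 0) := by
    refine IsUnit.of_mul_eq_one (r.coeff 0) ?_
    rw [← mul_coeff_zero, ← hr, joukowskiPullback_coeff_zero, (minpoly.monic hint).leadingCoeff]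
  rw [minpoly.isIntegrallyClosed_eq_field_fractions' ℚ hxint, coeff_map]
  rcases Int.isUnit_iff.mp hunit with h | h <;> simp [h]

theorem aeval_add_inv_minpoly_add_inv {L : Type*} [Field L] [CharZero L] (hx : x ≠ 0)
    (hint : IsIntegral ℤ (x + x⁻¹)) {z : L} (hz : aeval z (minpoly ℚ x) = 0) :
    z ≠ 0 ∧ aeval (z + z⁻¹) (minpoly ℚ (x + x⁻¹)) = 0 := by
  set Q := (minpoly ℤ (x + x⁻¹)).joukowskiPullback
  have hQz : aeval z Q = 0 := by
    rw [← aeval_map_algebraMap ℚ]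
    refine aeval_eq_zero_of_dvd_aeval_eq_zero (minpoly.dvd ℚ x ?_) hz
    rw [aeval_map_algebraMap, aeval_joukowskiPullback_minpoly_add_inv hx]
  have hz0 : z ≠ 0 := by
    rintro rfl
    rw [← coeff_zero_eq_aeval_zero', joukowskiPullback_coeff_zero,
      (minpoly.monic hint).leadingCoeff, map_one] at hQz
    exact one_ne_zero hQz
  refine ⟨hz0, ?_⟩
  rw [aeval_joukowskiPullback _ hz0] at hQz
  rw [minpoly.isIntegrallyClosed_eq_field_fractions' ℚ hint, aeval_map_algebraMap]
  exact (mul_eq_zero.mp hQz).resolve_left (pow_ne_zero _ hz0)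

end JoukowskiConjugates

theorem eq_or_eq_inv_of_add_inv_eq_add_inv {F : Type*} [Field F] {z a : F} (hz : z ≠ 0)
    (ha : a ≠ 0) (h : z + z⁻¹ = a + a⁻¹) : z = a ∨ z = a⁻¹ := by
  have : (z - a) * (z - a⁻¹) = 0 := by
    linear_combination z * h + mul_inv_cancel₀ ha - mul_inv_cancel₀ hz
  simpa [sub_eq_zero] using this

theorem abs_norm_sub_inv_norm_le {E : Type*} [NormedDivisionRing E] (z : E) :
    |‖z‖ - ‖z‖⁻¹| ≤ ‖z + z⁻¹‖ := by
  simpa using abs_norm_sub_norm_le z (-z⁻¹)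

theorem inv_lt_and_lt_of_abs_sub_inv_le {a r : ℝ} (ha : 1 < a) (hr : 0 < r)
    (h : |r - r⁻¹| ≤ a + a⁻¹ - 2) : a⁻¹ < r ∧ r < a := by
  have ha' : a⁻¹ < 1 := inv_lt_one_of_one_lt₀ ha
  obtain ⟨h₁, h₂⟩ := abs_le.mp h
  constructor
  · by_contra! hra
    have : a ≤ r⁻¹ := (le_inv_comm₀ (zero_lt_one.trans ha) hr).mpr hra
    linarith
  · by_contra! hra
    have : r⁻¹ ≤ a⁻¹ := inv_anti₀ (zero_lt_one.trans ha) hra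
    linarith

theorem perron_to_biperron_general (γ : ℝ) (hγ : IsPerron γ)
    (hconj : ∀ z : ℂ, (Polynomial.aeval z) (minpoly ℚ γ) = 0 → z ≠ (γ : ℂ) →
      ‖z‖ ≤ γ - 2)
    (α : ℝ) (hα : 1 < α) (hαγ : α + 1 / α = γ) :
    IsBiPerron α := by
  rw [one_div] at hαγ
  subst hαγ
  have hα0 : α ≠ 0 := (zero_lt_one.trans hα).ne'
  have hγint : IsIntegral ℤ (α + α⁻¹) := hγ.2.1
  refine ⟨hα, hγint.of_add_inv hα0, minpoly_coeff_zero_eq_one_or_neg_one_of_add_inv hα0 hγint,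
    fun z hz hzα hzα' => ?_⟩
  obtain ⟨hz0, hzγ⟩ := aeval_add_inv_minpoly_add_inv hα0 hγint hz
  have hne : z + z⁻¹ ≠ ((α + α⁻¹ : ℝ) : ℂ) := by
    push_cast
    exact fun h => (eq_or_eq_inv_of_add_inv_eq_add_inv hz0 (by exact_mod_cast hα0) h).elim hzα hzα'
  rw [one_div]
  exact inv_lt_and_lt_of_abs_sub_inv_le hα (norm_pos_iff.2 hz0)
    ((abs_norm_sub_inv_norm_le z).trans (hconj _ hzγ hne))

theorem perron_to_biperron (γ : ℝ) (hγ : IsPerron γ) (hγ2 : 2 < γ)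
    (hconj : ∀ z : ℂ, (Polynomial.aeval z) (minpoly ℚ γ) = 0 → z ≠ (γ : ℂ) →
      ‖z‖ ≤ γ - 2)
    (α : ℝ) (hα : 1 < α) (hαγ : α + 1 / α = γ) :
    IsBiPerron α :=
  perron_to_biperron_general γ hγ hconj α hα hαγ
end

section
/- Let a, b, c be positive integers with b ≥ 2 and a² ≤ c·b², and let f(x) = (c − x)·((a − x)² + b²) + 1. Then f has a real root ω₁ satisfying c < ω₁ ≤ c + 1 and ω₁ < c + (c + 1)/(a² + b² − 1). -/
/-! `f c = 1` and `f (c + t) ≤ 1 - t b²` for `t > 0`, so `f (c + t) < 0` for `t = min 1 δ`,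
`δ = (c + 1) / (a² + b² - 1)`: indeed `b² > 1`, and `δ b² > 1` amounts to `a² < c b² + 1`. The
intermediate value theorem then gives a root in `(c, c + t)`. -/

section

variable {a b c : ℝ}

lemma cubic_add_lt_zero {t : ℝ} (ht : 0 < t) (htb : 1 < t * b ^ 2) :
    (c - (c + t)) * ((a - (c + t)) ^ 2 + b ^ 2) + 1 < 0 := by
  nlinarith [mul_nonneg ht.le (sq_nonneg (a - (c + t)))]

lemma one_lt_div_mul_sq (hb : 1 < b ^ 2) (habc : a ^ 2 ≤ c * b ^ 2) :
    1 < (c + 1) / (a ^ 2 + b ^ 2 - 1) * b ^ 2 := by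
  have hden : 0 < a ^ 2 + b ^ 2 - 1 := by nlinarith [sq_nonneg a]
  rw [div_mul_eq_mul_div, one_lt_div hden]
  linarith

lemma exists_cubic_root_near (hb : 1 < b ^ 2) (habc : a ^ 2 ≤ c * b ^ 2) :
    ∃ ω, (c - ω) * ((a - ω) ^ 2 + b ^ 2) + 1 = 0 ∧ c < ω ∧ ω ≤ c + 1 ∧
      ω < c + (c + 1) / (a ^ 2 + b ^ 2 - 1) := by
  set δ := (c + 1) / (a ^ 2 + b ^ 2 - 1)
  have hδb : 1 < δ * b ^ 2 := one_lt_div_mul_sq hb habc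
  have hδ : 0 < δ := pos_of_mul_pos_left (one_pos.trans hδb) (by positivity)
  set t := min 1 δ
  have ht : 0 < t := lt_min one_pos hδ
  have htb : 1 < t * b ^ 2 := by
    rcases min_choice 1 δ with h | h <;> simp only [t, h] <;> linarith
  have hroot : (0 : ℝ) ∈ Set.Ioo ((c - (c + t)) * ((a - (c + t)) ^ 2 + b ^ 2) + 1)
      ((c - c) * ((a - c) ^ 2 + b ^ 2) + 1) :=
    ⟨cubic_add_lt_zero ht htb, by norm_num⟩
  obtain ⟨ω, ⟨hcω, hωt⟩, hω⟩ :=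
    intermediate_value_Ioo' (le_add_of_nonneg_right ht.le)
      (f := fun x ↦ (c - x) * ((a - x) ^ 2 + b ^ 2) + 1) (by fun_prop) hroot
  exact ⟨ω, hω, hcω, by linarith [min_le_left 1 δ], by linarith [min_le_right 1 δ]⟩

end

theorem cubic_has_real_root_near_c_general (a b c : ℕ) (hb : 2 ≤ b)
    (habc : (a : ℝ) ^ 2 ≤ (c : ℝ) * (b : ℝ) ^ 2)
    (f : ℝ → ℝ)
    (hf : f = fun x => ((c : ℝ) - x) * (((a : ℝ) - x) ^ 2 + (b : ℝ) ^ 2) + 1) :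
    ∃ ω₁ : ℝ, f ω₁ = 0 ∧ (c : ℝ) < ω₁ ∧ ω₁ ≤ (c : ℝ) + 1 ∧
      ω₁ < (c : ℝ) + ((c : ℝ) + 1) / ((a : ℝ) ^ 2 + (b : ℝ) ^ 2 - 1) := by
  subst hf
  have hb' : (2 : ℝ) ≤ b := by exact_mod_cast hb
  exact exists_cubic_root_near (by nlinarith) habc

theorem cubic_has_real_root_near_c (a b c : ℕ) (ha : 0 < a) (hb : 2 ≤ b) (hc : 0 < c)
    (habc : (a : ℝ) ^ 2 ≤ (c : ℝ) * (b : ℝ) ^ 2)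
    (f : ℝ → ℝ)
    (hf : f = fun x => ((c : ℝ) - x) * (((a : ℝ) - x) ^ 2 + (b : ℝ) ^ 2) + 1) :
    ∃ ω₁ : ℝ, f ω₁ = 0 ∧ (c : ℝ) < ω₁ ∧ ω₁ ≤ (c : ℝ) + 1 ∧
      ω₁ < (c : ℝ) + ((c : ℝ) + 1) / ((a : ℝ) ^ 2 + (b : ℝ) ^ 2 - 1) :=
  cubic_has_real_root_near_c_general a b c hb habc f hf
end

section
/- Let a, b, c be positive integers with b ≥ 2 and a² ≤ c·b², and let f(x) = (c − x)·((a − x)² + b²) + 1. Then f has exactly one real root; its other two roots are complex conjugates of each other with nonzero imaginary part. -/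
theorem cubic_exactly_one_real_root (a b c : ℕ) (ha : 0 < a) (hb : 2 ≤ b) (hc : 0 < c)
    (habc : (a : ℝ) ^ 2 ≤ (c : ℝ) * (b : ℝ) ^ 2)
    (f : ℂ → ℂ)
    (hf : f = fun x => ((c : ℂ) - x) * (((a : ℂ) - x) ^ 2 + (b : ℂ) ^ 2) + 1) :
    ∃ (ω₁ : ℝ) (ω₂ : ℂ), ω₂.im ≠ 0 ∧
      ∀ w : ℂ, f w = 0 ↔ (w = (ω₁ : ℂ) ∨ w = ω₂ ∨ w = (starRingEnd ℂ) ω₂) := by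
  have hb2 : (2:ℝ) ≤ (b:ℝ) := by exact_mod_cast hb
  -- real root via IVT
  set g : ℝ → ℝ := fun x => ((c:ℝ) - x) * (((a:ℝ) - x)^2 + (b:ℝ)^2) + 1 with hg
  have hgc : g c = 1 := by simp [hg]
  have hgc1 : g ((c:ℝ)+1) ≤ -3 := by
    simp only [hg]
    nlinarith [sq_nonneg ((a:ℝ) - ((c:ℝ)+1))]
  have hcont : ContinuousOn g (Set.Icc (c:ℝ) ((c:ℝ)+1)) := by fun_prop
  have hiv := intermediate_value_Icc' (by linarith : (c:ℝ) ≤ (c:ℝ)+1) hcont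
  have h0 : (0:ℝ) ∈ Set.Icc (g ((c:ℝ)+1)) (g (c:ℝ)) := by
    constructor <;> [linarith; linarith]
  obtain ⟨r, -, hr⟩ := hiv h0
  simp only [hg] at hr
  -- hr : (c - r) * ((a - r)^2 + b^2) + 1 = 0
  have hP : (4:ℝ) ≤ ((a:ℝ)-r)^2 + (b:ℝ)^2 := by nlinarith [sq_nonneg ((a:ℝ)-r)]
  have ht0 : 0 < r - (c:ℝ) := by nlinarith
  have ht4 : r - (c:ℝ) ≤ 1/4 := by nlinarith
  have hs1 : (r - (c:ℝ)) * ((a:ℝ)-r)^2 ≤ 1 := by nlinarith [sq_nonneg (b:ℝ)]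
  have hu : ((r-(c:ℝ))*((a:ℝ)-r))^2 ≤ 1/4 := by nlinarith [sq_nonneg ((a:ℝ)-r)]
  set B : ℝ := r - (c:ℝ) - 2*(a:ℝ) with hB
  set C : ℝ := r*B + (2*(a:ℝ)*(c:ℝ) + (a:ℝ)^2 + (b:ℝ)^2) with hC
  have hD : B^2 - 4*C < 0 := by
    rw [hB, hC]
    nlinarith [sq_nonneg ((r-(c:ℝ))*((a:ℝ)-r) - 1/2), hu, ht0, ht4, hb2]
  set e : ℝ := Real.sqrt (4*C - B^2) with he
  have he0 : 0 < e := Real.sqrt_pos.mpr (by linarith)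
  have he2 : e^2 = 4*C - B^2 := Real.sq_sqrt (by linarith)
  set ω₂ : ℂ := (↑(-B/2) : ℂ) + (↑(e/2) : ℂ) * Complex.I with hω
  have him : ω₂.im = e/2 := by simp [hω]
  have hconj : (starRingEnd ℂ) ω₂ = (↑(-B/2) : ℂ) - (↑(e/2) : ℂ) * Complex.I := by
    rw [hω, map_add, map_mul, Complex.conj_ofReal, Complex.conj_ofReal, Complex.conj_I]
    ring
  have he2c : (e:ℂ)^2 = 4*(C:ℂ) - (B:ℂ)^2 := by
    rw [← Complex.ofReal_pow, he2]; push_cast; ring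
  have hquad : ∀ w : ℂ, w^2 + (B:ℂ)*w + (C:ℂ) = (w - ω₂) * (w - (starRingEnd ℂ) ω₂) := by
    intro w
    rw [hconj, hω]
    push_cast
    linear_combination ((e:ℂ)^2/4) * Complex.I_sq + (-1/4 : ℂ) * he2c
  have hrC : ((c:ℂ) - (r:ℂ)) * (((a:ℂ) - (r:ℂ))^2 + (b:ℂ)^2) + 1 = 0 := by
    exact_mod_cast congrArg (Complex.ofReal) hr
  have hBc : (B:ℂ) = (r:ℂ) - (c:ℂ) - 2*(a:ℂ) := by rw [hB]; push_cast; ring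
  have hCc : (C:ℂ) = (r:ℂ)*((r:ℂ) - (c:ℂ) - 2*(a:ℂ)) + (2*(a:ℂ)*(c:ℂ) + (a:ℂ)^2 + (b:ℂ)^2) := by
    rw [hC, hB]; push_cast; ring
  have hfact : ∀ w : ℂ, f w = ((r:ℂ) - w) * ((w - ω₂) * (w - (starRingEnd ℂ) ω₂)) := by
    intro w
    rw [hf]
    simp only
    rw [← hquad, hBc, hCc]
    linear_combination hrC
  refine ⟨r, ω₂, by rw [him]; positivity, fun w => ?_⟩
  rw [hfact w]
  rw [mul_eq_zero, mul_eq_zero, sub_eq_zero, sub_eq_zero, sub_eq_zero]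
  constructor
  · rintro (h | h | h)
    · exact Or.inl h.symm
    · exact Or.inr (Or.inl h)
    · exact Or.inr (Or.inr h)
  · rintro (h | h | h)
    · exact Or.inl h.symm
    · exact Or.inr (Or.inl h)
    · exact Or.inr (Or.inr h)
end

section
/- Let a, b, c be positive integers with b ≥ 2, a² ≤ c·b², and a² + b² < c², and let f(x) = (c − x)·((a − x)² + b²) + 1. Let ω₁ be the unique real root of f and ω₂ a nonreal root of f. Then |ω₂| < ω₁; in particular ω₁ is a Perron number (a cubic real algebraic integer strictly greater in absolute value than its other Galois conjugates). -/
/-!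
Let `P = -f`, a monic cubic with integer coefficients. For real `x ≤ c` both factors
of `(c - x)((a - x)² + b²)` are nonnegative, so `f x ≥ 1` and the real root satisfies `c < ω₁`.
The roots are `ω₁, ω₂, conj ω₂`, so their product gives `ω₁ ‖ω₂‖² = c (a² + b²) + 1 ≤ c³ < ω₁³`,
using `a² + b² + 1 ≤ c²`. By Gauss's lemma `P` is irreducible over `ℚ` as soon as it has no integer
root, and an integer root `n` would make `(a - n)² + b² > 1` divide `1`. Hence `P` is the minimal
polynomial of `ω₁`, and its other roots are `ω₂` and `conj ω₂`.
-/

open Polynomial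

open ComplexConjugate

noncomputable def perronCubic {R : Type*} [CommRing R] (a b c : R) : R[X] :=
  X ^ 3 - C (c + 2 * a) * X ^ 2 + C (2 * a * c + a ^ 2 + b ^ 2) * X - C (c * (a ^ 2 + b ^ 2) + 1)

section
variable {R : Type*} [CommRing R] (a b c : R)

theorem monic_perronCubic : (perronCubic a b c).Monic := by
  unfold perronCubic; monicity!

theorem natDegree_perronCubic [Nontrivial R] : (perronCubic a b c).natDegree = 3 := by
  unfold perronCubic; compute_degree!

theorem aeval_perronCubic {A : Type*} [CommRing A] [Algebra R A] (x : A) :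
    aeval x (perronCubic a b c) =
      -((algebraMap R A c - x) * ((algebraMap R A a - x) ^ 2 + algebraMap R A b ^ 2) + 1) := by
  simp only [perronCubic, map_sub, map_add, map_mul, map_pow, aeval_X, aeval_C, map_one,
    map_ofNat]
  ring

end

theorem perronCubic_not_isRoot {a b c : ℤ} (hb : 1 < b ^ 2) (n : ℤ) :
    ¬(perronCubic a b c).IsRoot n := by
  intro h
  have hn : (c - n) * ((a - n) ^ 2 + b ^ 2) = -1 := by
    have := aeval_perronCubic a b c n
    rw [aeval_def, Algebra.algebraMap_self, eval₂_id, h.eq_zero] at this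
    simp only [RingHom.id_apply] at this
    linarith
  have : (a - n) ^ 2 + b ^ 2 ≤ 1 := Int.le_of_dvd one_pos ⟨-(c - n), by linarith⟩
  nlinarith [sq_nonneg (a - n)]

theorem irreducible_map_perronCubic {a b c : ℤ} (hb : 1 < b ^ 2) :
    Irreducible ((perronCubic a b c).map (algebraMap ℤ ℚ)) := by
  have hP := monic_perronCubic a b c
  rw [← hP.irreducible_iff_irreducible_map_fraction_map,
    hP.irreducible_iff_roots_eq_zero_of_degree_le_three (by rw [natDegree_perronCubic]; norm_num)
      (by rw [natDegree_perronCubic])]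
  exact Multiset.eq_zero_of_forall_notMem fun n hn ↦
    perronCubic_not_isRoot hb n (isRoot_of_mem_roots hn)

theorem Polynomial.Monic.eq_prod_X_sub_C_of_three_roots {R : Type*} [CommRing R] [IsDomain R]
    {p : R[X]} (hp : p.Monic) (hdeg : p.natDegree = 3) {x y z : R}
    (hxy : x ≠ y) (hxz : x ≠ z) (hyz : y ≠ z) (hx : p.IsRoot x) (hy : p.IsRoot y)
    (hz : p.IsRoot z) : p = (X - C x) * (X - C y) * (X - C z) := by
  have hroots : p.roots = {x, y, z} := by
    have hle : ({x, y, z} : Multiset R) ≤ p.roots := by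
      rw [Multiset.le_iff_subset (by simp [hxy, hxz, hyz])]
      simpa [hp.ne_zero] using ⟨hx, hy, hz⟩
    exact (Multiset.eq_of_le_of_card_le hle (by simpa [hdeg] using card_roots' p)).symm
  rw [← prod_multiset_X_sub_C_of_monic_of_roots_card_eq hp (by rw [hroots, hdeg]; rfl), hroots]
  simp [mul_assoc]

theorem aeval_eq_prod_of_real_root_of_nonreal_root {p : ℝ[X]} (hp : p.Monic)
    (hdeg : p.natDegree = 3) {r : ℝ} {z : ℂ} (hr : p.IsRoot r) (hz : aeval z p = 0)
    (him : z.im ≠ 0) (w : ℂ) : aeval w p = (w - r) * (w - z) * (w - conj z) := by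
  have hfactor := (hp.map (algebraMap ℝ ℂ)).eq_prod_X_sub_C_of_three_roots
    (by rwa [natDegree_map]) (x := r) (y := z) (z := conj z)
    (fun h ↦ him (by simpa using congrArg Complex.im h.symm))
    (fun h ↦ him (by simpa using congrArg Complex.im h.symm))
    (fun h ↦ him (by linarith [congrArg Complex.im h, Complex.conj_im z]))
    (by rw [IsRoot, eval_map_algebraMap]; exact (aeval_ofReal p r).trans (by simp [hr.eq_zero]))
    (by simp [eval_map_algebraMap, hz])
    (by simp [eval_map_algebraMap, aeval_conj, hz])
  rw [← eval_map_algebraMap, hfactor]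
  simp

theorem lt_of_aeval_perronCubic_eq_zero {a b c : ℤ} {x : ℝ}
    (hx : aeval x (perronCubic a b c) = 0) : (c : ℝ) < x := by
  rw [aeval_perronCubic, eq_intCast, eq_intCast, eq_intCast] at hx
  nlinarith [sq_nonneg ((a : ℝ) - x), sq_nonneg (b : ℝ)]

theorem mul_norm_sq_eq_of_aeval_perronCubic_eq {a b c : ℤ} {r : ℝ} {z : ℂ}
    (h : ∀ w : ℂ, aeval w (perronCubic a b c) = (w - r) * (w - z) * (w - conj z)) :
    r * ‖z‖ ^ 2 = c * (a ^ 2 + b ^ 2) + 1 := by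
  have h₀ := h 0
  rw [aeval_perronCubic] at h₀
  simp only [eq_intCast, sub_zero, zero_sub] at h₀
  exact_mod_cast (by linear_combination h₀ - (r : ℂ) * Complex.mul_conj' z :
    (r : ℂ) * (‖z‖ : ℂ) ^ 2 = c * (a ^ 2 + b ^ 2) + 1)

theorem lt_of_mul_sq_eq {r s t u : ℝ} (hs : 1 ≤ s) (hst : u + 1 ≤ s ^ 2) (hsr : s < r)
    (h : r * t ^ 2 = s * u + 1) : t < r := by
  have hr : 0 < r := by linarith
  have hcube : r * t ^ 2 < r * r ^ 2 := by
    calc r * t ^ 2 = s * u + 1 := h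
      _ ≤ s ^ 3 := by nlinarith
      _ < r ^ 3 := by gcongr
      _ = r * r ^ 2 := by ring
  exact lt_of_pow_lt_pow_left₀ 2 hr.le (lt_of_mul_lt_mul_left hcube hr.le)

theorem cubic_root_is_perron_general (a b c : ℕ) (hb : 2 ≤ b) (hc : 0 < c)
    (habc2 : (a : ℝ) ^ 2 + (b : ℝ) ^ 2 < (c : ℝ) ^ 2)
    (f : ℂ → ℂ)
    (hf : f = fun x => ((c : ℂ) - x) * (((a : ℂ) - x) ^ 2 + (b : ℂ) ^ 2) + 1)
    (ω₁ : ℝ) (hω₁ : f (ω₁ : ℂ) = 0)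
    (ω₂ : ℂ) (hω₂ : f ω₂ = 0) (him : ω₂.im ≠ 0) :
    ‖ω₂‖ < ω₁ ∧ IsPerron ω₁ ∧ (minpoly ℚ ω₁).natDegree = 3 := by
  set P := perronCubic (a : ℤ) b c
  have hPf (x : ℂ) : aeval x P = -f x := by simp [P, hf, aeval_perronCubic]
  have hP₁ : aeval ω₁ P = 0 := by
    apply (algebraMap ℝ ℂ).injective
    rw [← aeval_algebraMap_apply, Complex.coe_algebraMap, hPf, hω₁, neg_zero, Complex.ofReal_zero]
  have hfactor (w : ℂ) : aeval w P = (w - ω₁) * (w - ω₂) * (w - conj ω₂) := by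
    rw [← aeval_map_algebraMap ℝ]
    exact aeval_eq_prod_of_real_root_of_nonreal_root ((monic_perronCubic _ _ _).map _)
      (by rw [(monic_perronCubic _ _ _).natDegree_map, natDegree_perronCubic])
      (by rwa [IsRoot, eval_map_algebraMap])
      (by rw [aeval_map_algebraMap, hPf, hω₂, neg_zero]) him w
  have hmin : minpoly ℚ ω₁ = P.map (algebraMap ℤ ℚ) :=
    (minpoly.eq_of_irreducible_of_monic (irreducible_map_perronCubic (by norm_cast; nlinarith))
      (by rwa [aeval_map_algebraMap]) ((monic_perronCubic _ _ _).map _)).symm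
  have hcω₁ : (c : ℝ) < ω₁ := lt_of_aeval_perronCubic_eq_zero hP₁
  have hc₁ : (1 : ℝ) ≤ c := by exact_mod_cast hc
  have hnorm : ‖ω₂‖ < ω₁ :=
    lt_of_mul_sq_eq (u := (a : ℝ) ^ 2 + (b : ℝ) ^ 2) hc₁
      (by exact_mod_cast (by exact_mod_cast habc2 : a ^ 2 + b ^ 2 < c ^ 2)) hcω₁
      (by exact_mod_cast mul_norm_sq_eq_of_aeval_perronCubic_eq hfactor)
  refine ⟨hnorm, ⟨by linarith, ⟨P, monic_perronCubic _ _ _, hP₁⟩, fun z hz hne ↦ ?_⟩,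
    by rw [hmin, (monic_perronCubic _ _ _).natDegree_map, natDegree_perronCubic]⟩
  rw [hmin, aeval_map_algebraMap, hfactor] at hz
  simp only [mul_eq_zero, sub_eq_zero] at hz
  obtain (rfl | rfl) | rfl := hz
  · exact absurd rfl hne
  · exact hnorm
  · rwa [Complex.norm_conj]

theorem cubic_root_is_perron (a b c : ℕ) (ha : 0 < a) (hb : 2 ≤ b) (hc : 0 < c)
    (habc : (a : ℝ) ^ 2 ≤ (c : ℝ) * (b : ℝ) ^ 2)
    (habc2 : (a : ℝ) ^ 2 + (b : ℝ) ^ 2 < (c : ℝ) ^ 2)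
    (f : ℂ → ℂ)
    (hf : f = fun x => ((c : ℂ) - x) * (((a : ℂ) - x) ^ 2 + (b : ℂ) ^ 2) + 1)
    (ω₁ : ℝ) (hω₁ : f (ω₁ : ℂ) = 0)
    (ω₂ : ℂ) (hω₂ : f ω₂ = 0) (him : ω₂.im ≠ 0) :
    ‖ω₂‖ < ω₁ ∧ IsPerron ω₁ ∧ (minpoly ℚ ω₁).natDegree = 3 :=
  cubic_root_is_perron_general a b c hb hc habc2 f hf ω₁ hω₁ ω₂ hω₂ him
end

section
/- Let a, b, c be positive integers with b ≥ 2 and a² ≤ c·b², and let f(x) = (c − x)·((a − x)² + b²) + 1. Let ω₂ be a nonreal root of f. Then |ω₂|² ≥ a² + b² − 1. -/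
/-!
Write a nonreal root as `z = s + t i` with `t ≠ 0`, and put `u = a - s`, `w = a + c - 2s`.
Dividing the imaginary part of `f z = 0` by `t` gives `t² = u² + b² + 2u(c - s)`, and then the
real part becomes `2u(w² + b²) = 1`, which forces `u > 0`. Substituting,
`s² + t² - (a² + b² - 1) = 2u (w² + w + b² - a)`, and since `w ≥ c - a` (as `u > 0`) the last factor
is at least `c + b² - 2a ≥ 0`, by AM-GM and `a² ≤ c b²`.
-/

lemma two_mul_le_add_of_sq_le_mul_sq {a b c : ℝ} (hc : 0 ≤ c) (h : a ^ 2 ≤ c * b ^ 2) :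
    2 * a ≤ c + b ^ 2 := by
  nlinarith [sq_nonneg (c - b ^ 2), sq_nonneg b]

lemma re_im_relations_of_cubic_eq_zero (a b c : ℝ) {z : ℂ}
    (hz : (c - z) * ((a - z) ^ 2 + b ^ 2) + 1 = 0) (him : z.im ≠ 0) :
    z.im ^ 2 = (a - z.re) ^ 2 + b ^ 2 + 2 * (a - z.re) * (c - z.re) ∧
      2 * (a - z.re) * ((a + c - 2 * z.re) ^ 2 + b ^ 2) = 1 := by
  obtain ⟨hre, him0⟩ := Complex.ext_iff.mp hz
  simp only [Complex.add_re, Complex.add_im, Complex.mul_re, Complex.mul_im, Complex.sub_re,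
    Complex.sub_im, Complex.one_re, Complex.one_im, Complex.zero_re, Complex.zero_im,
    Complex.ofReal_re, Complex.ofReal_im, pow_two] at hre him0
  have him_eq : z.im * (z.im ^ 2 - ((a - z.re) ^ 2 + b ^ 2 + 2 * (a - z.re) * (c - z.re))) = 0 := by
    linear_combination him0
  have him_sq := sub_eq_zero.mp ((mul_eq_zero.mp him_eq).resolve_left him)
  exact ⟨him_sq, by linear_combination -(2 * a + c - 3 * z.re) * him_sq - hre⟩

lemma add_sq_sub_one_le_sq_add_sq {a b c s t : ℝ} (hc : 0 ≤ c) (habc : a ^ 2 ≤ c * b ^ 2)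
    (ht : t ^ 2 = (a - s) ^ 2 + b ^ 2 + 2 * (a - s) * (c - s))
    (hs : 2 * (a - s) * ((a + c - 2 * s) ^ 2 + b ^ 2) = 1) :
    a ^ 2 + b ^ 2 - 1 ≤ s ^ 2 + t ^ 2 := by
  have hu : 0 < a - s := by
    by_contra! hu
    nlinarith [sq_nonneg (a + c - 2 * s), sq_nonneg b]
  have hfactor : 0 ≤ (a + c - 2 * s) ^ 2 + (a + c - 2 * s) + b ^ 2 - a := by
    linarith [sq_nonneg (a + c - 2 * s), two_mul_le_add_of_sq_le_mul_sq hc habc]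
  have hdiff : s ^ 2 + t ^ 2 - (a ^ 2 + b ^ 2 - 1)
      = 2 * (a - s) * ((a + c - 2 * s) ^ 2 + (a + c - 2 * s) + b ^ 2 - a) := by
    linear_combination ht - hs
  linarith [mul_nonneg hu.le hfactor]

theorem nonreal_root_modulus_lower_bound_general (a b c : ℕ)
    (habc : (a : ℝ) ^ 2 ≤ (c : ℝ) * (b : ℝ) ^ 2)
    (f : ℂ → ℂ)
    (hf : f = fun x => ((c : ℂ) - x) * (((a : ℂ) - x) ^ 2 + (b : ℂ) ^ 2) + 1)
    (ω₂ : ℂ) (hω₂ : f ω₂ = 0) (him : ω₂.im ≠ 0) :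
    (a : ℝ) ^ 2 + (b : ℝ) ^ 2 - 1 ≤ ‖ω₂‖ ^ 2 := by
  subst hf
  obtain ⟨him_sq, hre⟩ := re_im_relations_of_cubic_eq_zero (a : ℝ) b c (by simpa using hω₂) him
  rw [Complex.sq_norm, Complex.normSq_apply, ← pow_two, ← pow_two]
  exact add_sq_sub_one_le_sq_add_sq c.cast_nonneg habc him_sq hre

theorem nonreal_root_modulus_lower_bound (a b c : ℕ) (ha : 0 < a) (hb : 2 ≤ b) (hc : 0 < c)
    (habc : (a : ℝ) ^ 2 ≤ (c : ℝ) * (b : ℝ) ^ 2)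
    (f : ℂ → ℂ)
    (hf : f = fun x => ((c : ℂ) - x) * (((a : ℂ) - x) ^ 2 + (b : ℂ) ^ 2) + 1)
    (ω₂ : ℂ) (hω₂ : f ω₂ = 0) (him : ω₂.im ≠ 0) :
    (a : ℝ) ^ 2 + (b : ℝ) ^ 2 - 1 ≤ ‖ω₂‖ ^ 2 :=
  nonreal_root_modulus_lower_bound_general a b c habc f hf ω₂ hω₂ him
end

section
/- Let a, b, c be positive integers with b ≥ 2, a² ≤ c·b², and a² + b² < c², and let f(x) = (c − x)·((a − x)² + b²) + 1. Let ω₁ be the unique real root of f and ω₂ a nonreal root of f. Then: (i) |Re(ω₂)| ≤ a; (ii) 0 < ω₁ − Re(ω₂) < c − a + 2; and (iii) (Im(ω₂))² ≥ b² − 1. -/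
lemma aux_vieta (A B C ω₁ r s : ℝ)
    (hA : 1 ≤ A) (hB : 2 ≤ B) (hC : 1 ≤ C)
    (hABC2 : A ^ 2 + B ^ 2 < C ^ 2)
    (h1 : (C - ω₁) * ((A - ω₁)^2 + B^2) + 1 = 0)
    (e2 : 2*(C+2*A)*r - 3*r^2 + s^2 - (2*A*C+A^2+B^2) = 0)
    (e3 : (C - r) * ((A - r)^2 - s^2 + B^2) - 2*(A - r)*s^2 + 1 = 0)
    (hs2 : 0 < s ^ 2) :
    |r| ≤ A ∧ (0 < ω₁ - r ∧ ω₁ - r < C - A + 2) ∧ B ^ 2 - 1 ≤ s ^ 2 := by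
  have key2 : (ω₁ - (C+2*A-2*r)) * ((ω₁-r)^2+s^2) = 0 := by
    linear_combination (-1)*h1 + (ω₁ - r)*e2 + e3
  have hV1 : ω₁ = C+2*A-2*r := by
    rcases mul_eq_zero.mp key2 with h | h
    · linarith
    · exfalso; linarith [sq_nonneg (ω₁ - r)]
  have hca : A < C := by
    by_contra h
    push_neg at h
    have h2 : C^2 ≤ A^2 := pow_le_pow_left₀ (by linarith) h 2
    linarith [sq_nonneg B]
  have hgc : (ω₁ - C) * ((C-r)^2+s^2) = 1 := by
    linear_combination ((C-r)^2+s^2) * hV1 + (r-C)*e2 + (-1)*e3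
  have hQc : 0 < (C-r)^2+s^2 := by linarith [sq_nonneg (C-r), hs2]
  have hωc : C < ω₁ := by
    by_contra h
    push_neg at h
    linarith [mul_nonneg (sub_nonneg.mpr h) hQc.le, hgc]
  have hgc1 : (ω₁ - (C+1)) * ((C+1-r)^2+s^2) = 1 - ((A-C-1)^2 + B^2) := by
    linear_combination ((C+1-r)^2+s^2) * hV1 + (r-(C+1))*e2 + (-1)*e3
  have hQc1 : 0 < (C+1-r)^2+s^2 := by linarith [sq_nonneg (C+1-r), hs2]
  have hωc1 : ω₁ < C + 1 := by
    by_contra h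
    push_neg at h
    have hB4 : (4:ℝ) ≤ B^2 := by
      have h4 : (2:ℝ)*2 ≤ B*B := mul_le_mul hB hB (by norm_num) (by linarith)
      linarith [h4, sq B]
    linarith [mul_nonneg (sub_nonneg.mpr h) hQc1.le, hgc1, sq_nonneg (A-C-1), hB4]
  have hra : r < A := by linarith
  have hra2 : A - 1/2 < r := by linarith
  have hs2b : s^2 - B^2 = (A-r)*(2*C+A-3*r) := by linear_combination e2
  have hfac : 0 < (A-r)*(2*C+A-3*r) := by
    apply mul_pos <;> linarith
  refine ⟨?_, ⟨?_, ?_⟩, ?_⟩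
  · rw [abs_le]; constructor <;> linarith
  · linarith
  · linarith
  · linarith

theorem root_real_imaginary_part_bounds (a b c : ℕ) (ha : 0 < a) (hb : 2 ≤ b) (hc : 0 < c)
    (habc : (a : ℝ) ^ 2 ≤ (c : ℝ) * (b : ℝ) ^ 2)
    (habc2 : (a : ℝ) ^ 2 + (b : ℝ) ^ 2 < (c : ℝ) ^ 2)
    (f : ℂ → ℂ)
    (hf : f = fun x => ((c : ℂ) - x) * (((a : ℂ) - x) ^ 2 + (b : ℂ) ^ 2) + 1)
    (ω₁ : ℝ) (hω₁ : f (ω₁ : ℂ) = 0)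
    (ω₂ : ℂ) (hω₂ : f ω₂ = 0) (him : ω₂.im ≠ 0) :
    |ω₂.re| ≤ (a : ℝ) ∧
    (0 < ω₁ - ω₂.re ∧ ω₁ - ω₂.re < (c : ℝ) - (a : ℝ) + 2) ∧
    (b : ℝ) ^ 2 - 1 ≤ ω₂.im ^ 2 := by
  subst hf
  simp only at hω₁ hω₂
  have h1 : ((c:ℝ) - ω₁) * (((a:ℝ) - ω₁)^2 + (b:ℝ)^2) + 1 = 0 := by
    exact_mod_cast hω₁
  have hre := congrArg Complex.re hω₂
  have himg := congrArg Complex.im hω₂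
  simp only [Complex.add_re, Complex.add_im, Complex.mul_re, Complex.mul_im, Complex.sub_re,
    Complex.sub_im, Complex.natCast_re, Complex.natCast_im, Complex.one_re, Complex.one_im,
    Complex.zero_re, Complex.zero_im, pow_two] at hre himg
  have key : ω₂.im * (2*((c:ℝ)+2*(a:ℝ))*ω₂.re - 3*ω₂.re^2 + ω₂.im^2 - (2*(a:ℝ)*(c:ℝ)+(a:ℝ)^2+(b:ℝ)^2)) = 0 := by
    linear_combination himg
  have e2 : 2*((c:ℝ)+2*(a:ℝ))*ω₂.re - 3*ω₂.re^2 + ω₂.im^2 - (2*(a:ℝ)*(c:ℝ)+(a:ℝ)^2+(b:ℝ)^2) = 0 := by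
    rcases mul_eq_zero.mp key with h | h
    · exact absurd h him
    · exact h
  have e3 : ((c:ℝ) - ω₂.re) * (((a:ℝ) - ω₂.re)^2 - ω₂.im^2 + (b:ℝ)^2) - 2*((a:ℝ) - ω₂.re)*ω₂.im^2 + 1 = 0 := by
    linear_combination hre
  have hs2 : 0 < ω₂.im ^ 2 := lt_of_le_of_ne (sq_nonneg _) (Ne.symm (pow_ne_zero 2 him))
  have hb2 : (2:ℝ) ≤ (b:ℝ) := by exact_mod_cast hb
  have ha1 : (1:ℝ) ≤ (a:ℝ) := by exact_mod_cast ha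
  have hc1 : (1:ℝ) ≤ (c:ℝ) := by exact_mod_cast hc
  exact aux_vieta (a:ℝ) (b:ℝ) (c:ℝ) ω₁ ω₂.re ω₂.im ha1 hb2 hc1 habc2 h1 e2 e3 hs2
end

section
/- Let ε > 0 be real and let a, b, c be positive integers with b ≥ 2, a² ≤ c·b², a² + b² < c², and 0 < c − a ≤ ε·b. Let f(x) = (c − x)·((a − x)² + b²) + 1, let ω₁ be the unique real root of f and ω₂ a nonreal root of f. Then ((ω₁ − Re(ω₂)) / Im(ω₂))² ≤ (ε + 2/b)² / (1 − 1/b²). -/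
set_option maxHeartbeats 1600000 in
theorem eta_tangent_bound (ε : ℝ) (hε : 0 < ε) (a b c : ℕ) (ha : 0 < a) (hb : 2 ≤ b) (hc : 0 < c)
    (habc : (a : ℝ) ^ 2 ≤ (c : ℝ) * (b : ℝ) ^ 2)
    (habc2 : (a : ℝ) ^ 2 + (b : ℝ) ^ 2 < (c : ℝ) ^ 2)
    (hca : (a : ℝ) < (c : ℝ)) (hcab : (c : ℝ) - (a : ℝ) ≤ ε * (b : ℝ))
    (f : ℂ → ℂ)
    (hf : f = fun x => ((c : ℂ) - x) * (((a : ℂ) - x) ^ 2 + (b : ℂ) ^ 2) + 1)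
    (ω₁ : ℝ) (hω₁ : f (ω₁ : ℂ) = 0)
    (ω₂ : ℂ) (hω₂ : f ω₂ = 0) (him : ω₂.im ≠ 0) :
    ((ω₁ - ω₂.re) / ω₂.im) ^ 2 ≤ (ε + 2 / (b : ℝ)) ^ 2 / (1 - 1 / (b : ℝ) ^ 2) := by
  subst hf
  simp only at hω₁ hω₂
  set A : ℝ := (a : ℝ) with hA
  set B : ℝ := (b : ℝ) with hB
  set C : ℝ := (c : ℝ) with hC
  have hB2 : (2 : ℝ) ≤ B := by rw [hB]; exact_mod_cast hb
  -- real root equation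
  have h1 : (C - ω₁) * ((A - ω₁) ^ 2 + B ^ 2) + 1 = 0 := by
    rw [hA, hB, hC]; exact_mod_cast hω₁
  set δ : ℝ := ω₁ - C with hδ
  have hK : (0:ℝ) < (A - ω₁) ^ 2 + B ^ 2 := by nlinarith [sq_nonneg (A - ω₁)]
  have hδK : δ * ((A - ω₁) ^ 2 + B ^ 2) = 1 := by nlinarith [h1]
  have hδpos : 0 < δ := by nlinarith [hδK, hK, sq_nonneg (A - ω₁)]
  have hδb : δ * B ^ 2 ≤ 1 := by nlinarith [sq_nonneg (A - ω₁)]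
  -- factor out (ω₂ - ω₁)
  have hH : (ω₂ - (ω₁ : ℂ)) *
      (-(ω₂ * ω₂ + ω₂ * (ω₁ : ℂ) + (ω₁ : ℂ) * (ω₁ : ℂ))
        + ((c : ℂ) + 2 * (a : ℂ)) * (ω₂ + (ω₁ : ℂ))
        - (2 * (a : ℂ) * (c : ℂ) + (a : ℂ) * (a : ℂ) + (b : ℂ) * (b : ℂ))) = 0 := by
    linear_combination hω₂ - hω₁
  have hsub : ω₂ - (ω₁ : ℂ) ≠ 0 := by
    intro h
    apply him
    have := congrArg Complex.im h
    simpa using this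
  have hH0 : (-(ω₂ * ω₂ + ω₂ * (ω₁ : ℂ) + (ω₁ : ℂ) * (ω₁ : ℂ))
        + ((c : ℂ) + 2 * (a : ℂ)) * (ω₂ + (ω₁ : ℂ))
        - (2 * (a : ℂ) * (c : ℂ) + (a : ℂ) * (a : ℂ) + (b : ℂ) * (b : ℂ))) = 0 :=
    (mul_eq_zero.mp hH).resolve_left hsub
  set p : ℝ := ω₂.re with hp
  set q : ℝ := ω₂.im with hq
  have hre := congrArg Complex.re hH0
  have himeq := congrArg Complex.im hH0
  simp only [Complex.add_re, Complex.add_im, Complex.sub_re, Complex.sub_im, Complex.neg_re,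
    Complex.neg_im, Complex.mul_re, Complex.mul_im, Complex.ofReal_re, Complex.ofReal_im,
    Complex.natCast_re, Complex.natCast_im, Complex.re_ofNat, Complex.im_ofNat,
    Complex.zero_re, Complex.zero_im] at hre himeq
  rw [← hA, ← hB, ← hC, ← hp, ← hq] at hre himeq
  have hfac : q * (C + 2 * A - 2 * p - ω₁) = 0 := by linear_combination himeq
  have hpeq : p = (C + 2 * A - ω₁) / 2 := by
    rcases mul_eq_zero.mp hfac with h | h
    · exact absurd h him
    · linarith
  have hq2 : q ^ 2 = B ^ 2 + (C - A) * δ + (3 / 4) * δ ^ 2 := by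
    have hω : ω₁ = C + δ := by simp [hδ]
    rw [hpeq, hω] at hre
    linear_combination hre
  clear hre himeq hH hH0 hfac hω₁ hω₂ hsub h1 hδK hK
  clear_value p q δ A B C
  -- final bound
  have hd : 0 < C - A := by linarith
  have hB4 : (4:ℝ) ≤ B ^ 2 := by nlinarith [hB2]
  have hδle : δ ≤ 1 / 4 := by
    have h4 : δ * 4 ≤ δ * B ^ 2 := by
      apply mul_le_mul_of_nonneg_left hB4 hδpos.le
    linarith
  have hq2ge : B ^ 2 ≤ q ^ 2 := by
    have h6 : 0 ≤ (C - A) * δ := le_of_lt (mul_pos hd hδpos)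
    have h7 : 0 ≤ δ ^ 2 := sq_nonneg δ
    linarith [hq2]
  have hnum : ω₁ - p = (C - A) + 3 / 2 * δ := by rw [hpeq, hδ]; ring
  have hqpos : 0 < q ^ 2 := by positivity
  have hBpos : (0:ℝ) < B := by linarith
  have hN0 : 0 ≤ (C - A) + 3 / 2 * δ := by linarith
  have hNle : (C - A) + 3 / 2 * δ ≤ ε * B + 2 := by linarith
  have step1 : ((ω₁ - p) / q) ^ 2 ≤ (ε * B + 2) ^ 2 / B ^ 2 := by
    rw [div_pow, hnum]
    refine div_le_div₀ (by positivity) ?_ (by positivity) hq2ge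
    exact pow_le_pow_left₀ hN0 hNle 2
  have step2 : (ε * B + 2) ^ 2 / B ^ 2 = (ε + 2 / B) ^ 2 := by
    field_simp
  have hden : 0 < 1 - 1 / B ^ 2 := by
    have h8 : 1 / B ^ 2 ≤ 1 / 4 := by
      rw [div_le_div_iff₀ (by positivity) (by norm_num : (0:ℝ) < 4)]
      linarith
    linarith
  have step3 : (ε + 2 / B) ^ 2 ≤ (ε + 2 / B) ^ 2 / (1 - 1 / B ^ 2) := by
    rw [le_div_iff₀ hden]
    have h4 : 0 ≤ (ε + 2 / B) ^ 2 := sq_nonneg _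
    have h5 : 1 - 1 / B ^ 2 ≤ 1 := by
      have : 0 ≤ 1 / B ^ 2 := by positivity
      linarith
    nlinarith
  calc ((ω₁ - p) / q) ^ 2 ≤ (ε * B + 2) ^ 2 / B ^ 2 := step1
    _ = (ε + 2 / B) ^ 2 := step2
    _ ≤ (ε + 2 / B) ^ 2 / (1 - 1 / B ^ 2) := step3
end

section
/- Let a, b, c be positive integers with b ≥ 2, a² ≤ c·b², and sqrt(a² + b²) + 3 ≤ c, and let f(x) = (c − x)·((a − x)² + b²) + 1. Let ω₁ be the unique real root of f and ω₂ a nonreal root of f. Then ω₁ > 2 and |ω₂| ≤ ω₁ − 2. -/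
/-!
The real root `ω₁` of `f(x) = (c - x)((a - x)² + b²) + 1` satisfies `(ω₁ - c)((a - ω₁)² + b²) = 1`,
so `ω₁ > c`, and since `(a - ω₁)² + b² ≥ ω₁ - 2a` also `(ω₁ - c)(ω₁ - 2a) ≤ 1`.
Dividing `f(ω₂) - f(ω₁)` by `ω₂ - ω₁` and separating real and imaginary parts (Vieta's formulas for
the conjugate pair `ω₂, ω̄₂` and `ω₁`) gives `|ω₂|² = (ω₁ - c)(ω₁ - 2a) + a² + b² ≤ a² + b² + 1`.
Hence `|ω₂| ≤ √(a² + b²) + 1 ≤ c - 2 < ω₁ - 2`.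
-/

def gapCubic {R : Type*} [CommRing R] (a b c x : R) : R :=
  (c - x) * ((a - x) ^ 2 + b ^ 2) + 1

@[simp, norm_cast]
lemma Complex.ofReal_gapCubic (a b c x : ℝ) :
    ((gapCubic a b c x : ℝ) : ℂ) = gapCubic (a : ℂ) b c x := by
  simp [gapCubic]

lemma gapCubic_root_quadratic {R : Type*} [CommRing R] [IsDomain R] {a b c z w : R}
    (hz : gapCubic a b c z = 0) (hw : gapCubic a b c w = 0) (hzw : z ≠ w) :
    z ^ 2 + z * w + w ^ 2 - (c + 2 * a) * (z + w) + (2 * a * c + a ^ 2 + b ^ 2) = 0 := by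
  have h : (w - z) * (z ^ 2 + z * w + w ^ 2 - (c + 2 * a) * (z + w)
      + (2 * a * c + a ^ 2 + b ^ 2)) = 0 := by
    unfold gapCubic at hz hw
    linear_combination hz - hw
  exact (mul_eq_zero.1 h).resolve_left (sub_ne_zero.2 hzw.symm)

namespace gapCubic

variable {a b c w : ℝ}

lemma lt_of_eq_zero (hw : gapCubic a b c w = 0) : c < w := by
  unfold gapCubic at hw
  nlinarith [sq_nonneg (a - w), sq_nonneg b]

-- `t² - t + a + b² ≥ 0` for all real `t` exactly when `a + b² ≥ 1/4`.
lemma sub_mul_sub_le_one (hab : 1 / 4 ≤ a + b ^ 2) (hw : gapCubic a b c w = 0) :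
    (w - c) * (w - 2 * a) ≤ 1 := by
  have hwc := lt_of_eq_zero hw
  unfold gapCubic at hw
  have h : w - 2 * a ≤ (a - w) ^ 2 + b ^ 2 := by nlinarith [sq_nonneg (w - a - 1 / 2)]
  nlinarith [mul_le_mul_of_nonneg_left h (sub_nonneg.2 hwc.le)]

lemma normSq_eq_of_im_ne_zero {z : ℂ} (hw : gapCubic a b c w = 0)
    (hz : gapCubic (a : ℂ) b c z = 0) (him : z.im ≠ 0) :
    Complex.normSq z = (w - c) * (w - 2 * a) + a ^ 2 + b ^ 2 := by
  have hzw : z ≠ w := fun h => him (by simp [h])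
  have hq := gapCubic_root_quadratic hz (by exact_mod_cast congrArg Complex.ofReal hw) hzw
  have hre := congrArg Complex.re hq
  have him' := congrArg Complex.im hq
  simp only [pow_two, Complex.add_re, Complex.add_im, Complex.sub_re, Complex.sub_im,
    Complex.mul_re, Complex.mul_im, Complex.ofReal_re, Complex.ofReal_im, Complex.re_ofNat,
    Complex.im_ofNat, Complex.zero_re, Complex.zero_im] at hre him'
  -- the imaginary part is `z.im * (2 z.re + w - (c + 2a))`: the sum of the three roots is `c + 2a`
  have hsum : 2 * z.re + w - (c + 2 * a) = 0 :=
    (mul_eq_zero.1 (by linear_combination him')).resolve_left him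
  rw [Complex.normSq_apply]
  linear_combination (-1) * hre + z.re * hsum

lemma norm_sq_le {z : ℂ} (hab : 1 / 4 ≤ a + b ^ 2) (hw : gapCubic a b c w = 0)
    (hz : gapCubic (a : ℂ) b c z = 0) (him : z.im ≠ 0) :
    ‖z‖ ^ 2 ≤ a ^ 2 + b ^ 2 + 1 := by
  rw [Complex.sq_norm, normSq_eq_of_im_ne_zero hw hz him]
  linarith [sub_mul_sub_le_one hab hw]

end gapCubic

theorem roots_gap_two_general (a b c : ℕ) (hb : 2 ≤ b)
    (hsqrt : Real.sqrt ((a : ℝ) ^ 2 + (b : ℝ) ^ 2) + 3 ≤ (c : ℝ))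
    (f : ℂ → ℂ)
    (hf : f = fun x => ((c : ℂ) - x) * (((a : ℂ) - x) ^ 2 + (b : ℂ) ^ 2) + 1)
    (ω₁ : ℝ) (hω₁ : f (ω₁ : ℂ) = 0)
    (ω₂ : ℂ) (hω₂ : f ω₂ = 0) (him : ω₂.im ≠ 0) :
    2 < ω₁ ∧ ‖ω₂‖ ≤ ω₁ - 2 := by
  have hω₂' : gapCubic ((a : ℝ) : ℂ) (b : ℝ) (c : ℝ) ω₂ = 0 := by simpa [hf, gapCubic] using hω₂
  have hω₁' : gapCubic (a : ℝ) b c ω₁ = 0 := by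
    rw [← Complex.ofReal_eq_zero]; simpa [hf, gapCubic] using hω₁
  have hab : 1 / 4 ≤ (a : ℝ) + (b : ℝ) ^ 2 := by
    have : (2 : ℝ) ≤ b := by exact_mod_cast hb
    nlinarith [a.cast_nonneg (α := ℝ)]
  have hcω := gapCubic.lt_of_eq_zero hω₁'
  set s := Real.sqrt ((a : ℝ) ^ 2 + (b : ℝ) ^ 2)
  have hs : s ^ 2 = (a : ℝ) ^ 2 + (b : ℝ) ^ 2 := Real.sq_sqrt (by positivity)
  have hs0 : 0 ≤ s := Real.sqrt_nonneg _
  have hnorm : ‖ω₂‖ ≤ s + 1 := by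
    refine (pow_le_pow_iff_left₀ (norm_nonneg _) (by linarith) two_ne_zero).1 ?_
    nlinarith [gapCubic.norm_sq_le hab hω₁' hω₂' him]
  constructor <;> linarith

theorem roots_gap_two (a b c : ℕ) (ha : 0 < a) (hb : 2 ≤ b) (hc : 0 < c)
    (habc : (a : ℝ) ^ 2 ≤ (c : ℝ) * (b : ℝ) ^ 2)
    (hsqrt : Real.sqrt ((a : ℝ) ^ 2 + (b : ℝ) ^ 2) + 3 ≤ (c : ℝ))
    (f : ℂ → ℂ)
    (hf : f = fun x => ((c : ℂ) - x) * (((a : ℂ) - x) ^ 2 + (b : ℂ) ^ 2) + 1)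
    (ω₁ : ℝ) (hω₁ : f (ω₁ : ℂ) = 0)
    (ω₂ : ℂ) (hω₂ : f ω₂ = 0) (him : ω₂.im ≠ 0) :
    2 < ω₁ ∧ ‖ω₂‖ ≤ ω₁ - 2 :=
  roots_gap_two_general a b c hb hsqrt f hf ω₁ hω₁ ω₂ hω₂ him
end
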